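/- arXiv:2004.09261 — 6 statements merged into one kernel-verified Lean document; each statement's English description precedes it below -/
import Mathlib

section
/- For every v = (v_j)_{j∈𝑁} with each v_j ∈ [0,1], the equation B̄_𝑁(u) + B_𝑁(u,v) = 0 has at most two solutions u in [0,1]; that is, the set {u ∈ [0,1] : B̄_𝑁(u) + B_𝑁(u,v) = 0} contains at most 2 elements. -/
/-- Engine lemma: a power series `∑ c j * u ^ j` with `c 1 < 0` and all other
coefficients nonnegative cannot have three zeros `x < y < z` in `[0,1]`. -/
lemma stmt0_aux (c : ℕ → ℝ)
    (hc1 : c 1 < 0)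
    (hcnn : ∀ j : ℕ, j ≠ 1 → 0 ≤ c j)
    (hsum : ∀ u : ℝ, |u| ≤ 1 → Summable (fun j => c j * u ^ j))
    (hsum' : ∀ u : ℝ, |u| ≤ 1 → Summable (fun j => c (j + 1) * u ^ j))
    (x y z : ℝ) (hx0 : 0 ≤ x) (hxy : x < y) (hyz : y < z) (hz1 : z ≤ 1)
    (hFx : (∑' j : ℕ, c j * x ^ j) = 0)
    (hFy : (∑' j : ℕ, c j * y ^ j) = 0)
    (hFz : (∑' j : ℕ, c j * z ^ j) = 0) : False := by
  have hy0 : 0 < y := lt_of_le_of_lt hx0 hxy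
  have hz0 : 0 < z := hy0.trans hyz
  have hy1 : y ≤ 1 := le_of_lt (lt_of_lt_of_le hyz hz1)
  have hx1 : x ≤ 1 := le_of_lt (lt_of_lt_of_le hxy hy1)
  have hax : |x| ≤ 1 := abs_le.2 ⟨by linarith, hx1⟩
  have hay : |y| ≤ 1 := abs_le.2 ⟨by linarith, hy1⟩
  have haz : |z| ≤ 1 := abs_le.2 ⟨by linarith, hz1⟩
  -- F u = c 0 + u * H u
  have hFH : ∀ u : ℝ, |u| ≤ 1 →
      (∑' j : ℕ, c j * u ^ j) = c 0 + u * ∑' j : ℕ, c (j + 1) * u ^ j := by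
    intro u hu
    rw [Summable.tsum_eq_zero_add (hsum u hu)]
    simp only [pow_zero, mul_one]
    congr 1
    rw [← tsum_mul_left]
    exact tsum_congr fun j => by ring
  by_cases hc0 : c 0 = 0
  · -- Case I : c 0 = 0, so y, z are zeros of H, contradiction with monotonicity
    have hHy : (∑' j : ℕ, c (j + 1) * y ^ j) = 0 := by
      have := hFH y hay
      rw [hFy, hc0, zero_add] at this
      have := this.symm
      rcases mul_eq_zero.1 this with h | h
      · exact absurd h (ne_of_gt hy0)
      · exact h
    have hHz : (∑' j : ℕ, c (j + 1) * z ^ j) = 0 := by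
      have := hFH z haz
      rw [hFz, hc0, zero_add] at this
      rcases mul_eq_zero.1 this.symm with h | h
      · exact absurd h (ne_of_gt hz0)
      · exact h
    by_cases hk : ∀ k : ℕ, 2 ≤ k → c k = 0
    · -- then H y = c 1 < 0, contradicting H y = 0
      have : (∑' j : ℕ, c (j + 1) * y ^ j) = c 1 := by
        rw [tsum_eq_single 0]
        · simp
        · intro j hj
          rw [hk (j + 1) (by omega)]
          ring
      rw [hHy] at this
      linarith
    · push_neg at hk
      obtain ⟨k, hk2, hck⟩ := hk
      have hckpos : 0 < c k := lt_of_le_of_ne (hcnn k (by omega)) (Ne.symm hck)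
      have hlt : (∑' j : ℕ, c (j + 1) * y ^ j) < ∑' j : ℕ, c (j + 1) * z ^ j := by
        have hle : (fun j : ℕ => c (j + 1) * y ^ j) ≤ (fun j : ℕ => c (j + 1) * z ^ j) := by
          intro j
          rcases Nat.eq_zero_or_pos j with hj | hj
          · subst hj; simp
          · have h1 : (0:ℝ) ≤ c (j + 1) := hcnn (j + 1) (by omega)
            have h2 : y ^ j ≤ z ^ j := pow_le_pow_left₀ (le_of_lt hy0) (le_of_lt hyz) j
            exact mul_le_mul_of_nonneg_left h2 h1
        have hlti : c (k - 1 + 1) * y ^ (k - 1) < c (k - 1 + 1) * z ^ (k - 1) := by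
          have hkk : k - 1 + 1 = k := by omega
          rw [hkk]
          have hpow : y ^ (k - 1) < z ^ (k - 1) :=
            pow_lt_pow_left₀ hyz (le_of_lt hy0) (by omega)
          exact mul_lt_mul_of_pos_left hpow hckpos
        exact Summable.tsum_lt_tsum hle hlti (hsum' y hay) (hsum' z haz)
      rw [hHy, hHz] at hlt
      exact lt_irrefl 0 hlt
  · -- Case II : c 0 > 0
    have hc0pos : 0 < c 0 := lt_of_le_of_ne (hcnn 0 (by omega)) (Ne.symm hc0)
    have hx0' : 0 < x := by
      rcases lt_or_eq_of_le hx0 with h | h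
      · exact h
      · exfalso
        have := hFH x hax
        rw [hFx, ← h] at this
        simp at this
        linarith
    -- convexity setup
    have hzx : 0 < z - x := by linarith
    obtain ⟨t, ht_def⟩ : ∃ t : ℝ, t = (y - x) / (z - x) := ⟨_, rfl⟩
    have ht0 : 0 < t := ht_def ▸ div_pos (by linarith) hzx
    have ht1 : t < 1 := ht_def ▸ (div_lt_one hzx).2 (by linarith)
    obtain ⟨A, hA_def⟩ : ∃ A : ℝ, A = 1 - t := ⟨_, rfl⟩
    obtain ⟨B, hB_def⟩ : ∃ B : ℝ, B = t := ⟨_, rfl⟩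
    have hA0 : 0 < A := by rw [hA_def]; linarith
    have hB0 : 0 < B := hB_def ▸ ht0
    have hAB : A + B = 1 := by rw [hA_def, hB_def]; ring
    have hy_eq : y = A * x + B * z := by
      rw [hA_def, hB_def, ht_def]
      field_simp
      ring
    -- termwise convexity
    have hterm : ∀ j : ℕ, c (j + 1) * y ^ j ≤
        A * (c (j + 1) * x ^ j) + B * (c (j + 1) * z ^ j) := by
      intro j
      rcases Nat.eq_zero_or_pos j with hj | hj
      · subst hj; simp; nlinarith [hAB]
      · have hpow : y ^ j ≤ A * x ^ j + B * z ^ j := by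
          have hcv := (convexOn_pow (𝕜 := ℝ) j).2 (Set.mem_Ici.mpr hx0)
            (Set.mem_Ici.mpr (le_of_lt hz0)) (le_of_lt hA0) (le_of_lt hB0) hAB
          simpa [smul_eq_mul, ← hy_eq] using hcv
        have h1 : (0:ℝ) ≤ c (j + 1) := hcnn (j + 1) (by omega)
        nlinarith [mul_le_mul_of_nonneg_left hpow h1]
    have hsum_rhs : Summable (fun j : ℕ =>
        A * (c (j + 1) * x ^ j) + B * (c (j + 1) * z ^ j)) :=
      ((hsum' x hax).mul_left A).add ((hsum' z haz).mul_left B)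
    have hconv : (∑' j : ℕ, c (j + 1) * y ^ j) ≤
        A * (∑' j : ℕ, c (j + 1) * x ^ j) + B * (∑' j : ℕ, c (j + 1) * z ^ j) := by
      have := Summable.tsum_le_tsum hterm (hsum' y hay) hsum_rhs
      rwa [Summable.tsum_add ((hsum' x hax).mul_left A) ((hsum' z haz).mul_left B),
        tsum_mul_left, tsum_mul_left] at this
    -- H values
    have hHx : (∑' j : ℕ, c (j + 1) * x ^ j) = -(c 0 * (1 / x)) := by
      have h := hFH x hax
      rw [hFx] at h
      field_simp
      linarith
    have hHy : (∑' j : ℕ, c (j + 1) * y ^ j) = -(c 0 * (1 / y)) := by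
      have h := hFH y hay
      rw [hFy] at h
      field_simp
      linarith
    have hHz : (∑' j : ℕ, c (j + 1) * z ^ j) = -(c 0 * (1 / z)) := by
      have h := hFH z haz
      rw [hFz] at h
      field_simp
      linarith
    rw [hHx, hHy, hHz] at hconv
    -- strict convexity of 1/u
    have hinv : 1 / y < A * (1 / x) + B * (1 / z) := by
      have hBA : B = 1 - A := by linarith
      have hsq : 0 < A * (1 - A) * (x - z) ^ 2 :=
        mul_pos (mul_pos hA0 (by linarith))
          (pow_two_pos_of_ne_zero (sub_ne_zero_of_ne (ne_of_lt (show x < z by linarith))))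
      have h1 : x * z < (A * z + B * x) * y := by
        rw [hy_eq, hBA]
        nlinarith [hsq]
      have key : A * (1 / x) + B * (1 / z) - 1 / y =
          ((A * z + B * x) * y - x * z) / (x * y * z) := by
        field_simp
        try exact Or.inl trivial
      have hpos : 0 < ((A * z + B * x) * y - x * z) / (x * y * z) :=
        div_pos (by linarith) (mul_pos (mul_pos hx0' hy0) hz0)
      linarith [key ▸ hpos]
    have hfin : c 0 * (1 / y) < c 0 * (A * (1 / x) + B * (1 / z)) :=
      mul_lt_mul_of_pos_left hinv hc0pos
    linarith [hconv, hfin]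

/-- For every `v = (v_j)_{j∈N}` with each `v_j ∈ [0,1]`, the equation
`B̄_N(u) + B_N(u,v) = 0` has at most two solutions `u` in `[0,1]`. -/
theorem stmt_0
    (b : ℕ → ℝ)
    (hb_nonneg : ∀ j : ℕ, j ≠ 1 → 0 ≤ b j)
    (hb1 : b 1 < 0)
    (hb_sum : HasSum (fun j : ℕ => if j = 1 then 0 else b j) (-(b 1)))
    (N : Finset ℕ) (hN : N.Nonempty) (h1N : (1 : ℕ) ∉ N)
    (hbN : ∀ k ∈ N, 0 < b k)
    (v : ℕ → ℝ) (hv : ∀ j ∈ N, v j ∈ Set.Icc (0 : ℝ) 1) :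
    Set.encard {u : ℝ | u ∈ Set.Icc (0 : ℝ) 1 ∧
        (∑' j : ℕ, if j ∈ N then 0 else b j * u ^ j)
          + (∑ j ∈ N, b j * v j * u ^ j) = 0} ≤ 2 := by
  set S := {u : ℝ | u ∈ Set.Icc (0 : ℝ) 1 ∧
        (∑' j : ℕ, if j ∈ N then 0 else b j * u ^ j)
          + (∑ j ∈ N, b j * v j * u ^ j) = 0} with hS_def
  -- the combined coefficient sequence
  set c : ℕ → ℝ := fun j => if j ∈ N then b j * v j else b j with hc_def
  have hc1 : c 1 = b 1 := by simp [hc_def, h1N]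
  have hcnn : ∀ j : ℕ, j ≠ 1 → 0 ≤ c j := by
    intro j hj
    by_cases hjN : j ∈ N
    · simp only [hc_def, hjN, if_true]
      exact mul_nonneg (le_of_lt (hbN j hjN)) (hv j hjN).1
    · simp only [hc_def, hjN, if_false]
      exact hb_nonneg j hj
  -- summability facts
  have hSb : Summable (fun j : ℕ => |b j|) := by
    have h1 : Summable (fun j : ℕ => if j = 1 then (0:ℝ) else b j) := hb_sum.summable
    have h2 : Summable (fun j : ℕ => if j = 1 then b 1 else (0:ℝ)) := by
      apply summable_of_ne_finset_zero (s := {1})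
      intro j hj
      simp only [Finset.mem_singleton] at hj
      simp [hj]
    have h3 : Summable b := by
      have := h1.add h2
      apply this.congr
      intro j
      by_cases hj : j = 1 <;> simp [hj]
    exact h3.abs
  have hcb : ∀ j : ℕ, |c j| ≤ |b j| := by
    intro j
    by_cases hj : j ∈ N
    · simp only [hc_def, hj, if_true, abs_mul]
      have h1 := (hv j hj).1
      have h2 := (hv j hj).2
      have : |v j| ≤ 1 := abs_le.2 ⟨by linarith, h2⟩
      calc |b j| * |v j| ≤ |b j| * 1 := by
            exact mul_le_mul_of_nonneg_left this (abs_nonneg _)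
        _ = |b j| := mul_one _
    · simp [hc_def, hj]
  have hsum : ∀ u : ℝ, |u| ≤ 1 → Summable (fun j => c j * u ^ j) := by
    intro u hu
    apply summable_abs_iff.mp
    apply Summable.of_nonneg_of_le (fun j => abs_nonneg _) _ hSb
    intro j
    rw [abs_mul, abs_pow]
    calc |c j| * |u| ^ j ≤ |b j| * 1 ^ j := by
          apply mul_le_mul (hcb j) (pow_le_pow_left₀ (abs_nonneg _) hu j)
            (pow_nonneg (abs_nonneg _) j) (abs_nonneg _)
      _ = |b j| := by simp
  have hSb' : Summable (fun j : ℕ => |b (j + 1)|) := (summable_nat_add_iff 1).mpr hSb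
  have hsum' : ∀ u : ℝ, |u| ≤ 1 → Summable (fun j => c (j + 1) * u ^ j) := by
    intro u hu
    apply summable_abs_iff.mp
    apply Summable.of_nonneg_of_le (fun j => abs_nonneg _) _ hSb'
    intro j
    rw [abs_mul, abs_pow]
    calc |c (j + 1)| * |u| ^ j ≤ |b (j + 1)| * 1 ^ j := by
          apply mul_le_mul (hcb (j + 1)) (pow_le_pow_left₀ (abs_nonneg _) hu j)
            (pow_nonneg (abs_nonneg _) j) (abs_nonneg _)
      _ = |b (j + 1)| := by simp
  -- membership in S gives a zero of the power series with coefficients c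
  have hmem : ∀ u ∈ S, 0 ≤ u ∧ u ≤ 1 ∧ (∑' j : ℕ, c j * u ^ j) = 0 := by
    intro u hu
    obtain ⟨⟨hu0, hu1⟩, heq⟩ := hu
    have hau : |u| ≤ 1 := abs_le.2 ⟨by linarith, hu1⟩
    refine ⟨hu0, hu1, ?_⟩
    have e1 : Summable (fun j : ℕ => if j ∈ N then (0:ℝ) else b j * u ^ j) := by
      apply summable_abs_iff.mp
      apply Summable.of_nonneg_of_le (fun j => abs_nonneg _) _ hSb
      intro j
      by_cases hj : j ∈ N
      · simp [hj]
      · simp only [hj, if_false]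
        rw [abs_mul, abs_pow]
        calc |b j| * |u| ^ j ≤ |b j| * 1 ^ j := by
              apply mul_le_mul_of_nonneg_left
                (pow_le_pow_left₀ (abs_nonneg _) hau j) (abs_nonneg _)
          _ = |b j| := by simp
    have e2 : Summable (fun j : ℕ => if j ∈ N then b j * v j * u ^ j else (0:ℝ)) := by
      apply summable_of_ne_finset_zero (s := N)
      intro j hj
      simp [hj]
    have key : (∑' j : ℕ, c j * u ^ j) =
        (∑' j : ℕ, if j ∈ N then (0:ℝ) else b j * u ^ j)
          + (∑' j : ℕ, if j ∈ N then b j * v j * u ^ j else (0:ℝ)) := by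
      rw [← Summable.tsum_add e1 e2]
      apply tsum_congr
      intro j
      by_cases hj : j ∈ N <;> simp [hc_def, hj]
    have key2 : (∑' j : ℕ, if j ∈ N then b j * v j * u ^ j else (0:ℝ)) =
        ∑ j ∈ N, b j * v j * u ^ j := by
      rw [tsum_eq_sum (s := N)]
      · apply Finset.sum_congr rfl
        intro j hj
        simp [hj]
      · intro j hj
        simp [hj]
    rw [key, key2, heq]
  -- main contradiction lemma
  have hmain : ∀ x y z : ℝ, x ∈ S → y ∈ S → z ∈ S → x < y → y < z → False := by
    intro x y z hxS hyS hzS hxy hyz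
    obtain ⟨hx0, hx1, hFx⟩ := hmem x hxS
    obtain ⟨hy0, hy1, hFy⟩ := hmem y hyS
    obtain ⟨hz0, hz1, hFz⟩ := hmem z hzS
    exact stmt0_aux c (hc1 ▸ hb1) hcnn hsum hsum' x y z hx0 hxy hyz hz1 hFx hFy hFz
  -- conclude
  by_contra hcon
  have h3 : (3:ℕ∞) ≤ S.encard := by
    have h2 : (2:ℕ∞) < S.encard := not_le.mp hcon
    exact Order.add_one_le_of_lt h2
  obtain ⟨T, hTS, hT3⟩ := Set.exists_subset_encard_eq h3
  rw [Set.encard_eq_three] at hT3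
  obtain ⟨a, p, q, hap, haq, hpq, rfl⟩ := hT3
  have ha : a ∈ S := hTS (by simp)
  have hp : p ∈ S := hTS (by simp)
  have hq : q ∈ S := hTS (by simp)
  rcases hap.lt_or_gt with h1 | h1 <;> rcases haq.lt_or_gt with h2 | h2 <;>
    rcases hpq.lt_or_gt with h3 | h3 <;>
    first
      | exact hmain a p q ha hp hq (by linarith) (by linarith)
      | exact hmain a q p ha hq hp (by linarith) (by linarith)
      | exact hmain p a q hp ha hq (by linarith) (by linarith)
      | exact hmain p q a hp hq ha (by linarith) (by linarith)
      | exact hmain q a p hq ha hp (by linarith) (by linarith)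
      | exact hmain q p a hq hp ha (by linarith) (by linarith)
end

section
/- For every v = (v_j)_{j∈𝑁} with each v_j ∈ [0,1], the set {u ∈ [0,1] : B̄_𝑁(u) + B_𝑁(u,v) = 0} is nonempty and has a least element ρ(v); moreover ρ(v) ≤ ρ, where ρ is the least element of the (nonempty) set {u ∈ [0,1] : B(u) = 0}. -/
/-!
`B` has absolutely summable coefficients, so it is continuous on `[0, 1]` and vanishes at `1`;
its zero set there is closed, which gives the least zero `ρ`. Removing the nonnegative terms
`b j (1 - v j) u ^ j`, `j ∈ N`, from `B` yields `G = B̄_N + B_N(·, v)`, so `G ρ ≤ B ρ = 0`, while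
`G 0 ≥ 0` because only `b 1` can be negative. The intermediate value theorem on `[0, ρ]` gives a
zero of `G` below `ρ`, and closedness again gives the least one.
-/

open Set Finset

section LeastZero

variable {α : Type*} [ConditionallyCompleteLinearOrder α] [TopologicalSpace α] [OrderTopology α]
  {f : α → ℝ} {a b x : α}

theorem ContinuousOn.exists_isLeast_zero (hf : ContinuousOn f (Icc a b)) (hx : x ∈ Icc a b)
    (hfx : f x = 0) : ∃ m, IsLeast {u | u ∈ Icc a b ∧ f u = 0} m :=
  ⟨_, (hf.preimage_isClosed_of_isClosed isClosed_Icc isClosed_singleton).isLeast_csInf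
    ⟨x, hx, hfx⟩ ⟨a, fun _ hu => hu.1.1⟩⟩

theorem ContinuousOn.exists_isLeast_zero_le [DenselyOrdered α] (hf : ContinuousOn f (Icc a b))
    (hfa : 0 ≤ f a) (hx : x ∈ Icc a b) (hfx : f x ≤ 0) :
    ∃ m, IsLeast {u | u ∈ Icc a b ∧ f u = 0} m ∧ m ≤ x := by
  have hsub : Icc a x ⊆ Icc a b := Icc_subset_Icc le_rfl hx.2
  obtain ⟨y, hy, hfy⟩ := intermediate_value_Icc' hx.1 (hf.mono hsub) ⟨hfx, hfa⟩
  obtain ⟨m, hm⟩ := hf.exists_isLeast_zero (hsub hy) hfy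
  exact ⟨m, hm, (hm.2 ⟨hsub hy, hfy⟩).trans hy.2⟩

end LeastZero

theorem tsum_ite_mem_add_sum {ι M : Type*} [DecidableEq ι] [AddCommGroup M] [TopologicalSpace M]
    [IsTopologicalAddGroup M] [T2Space M] {f : ι → M} (hf : Summable f) (s : Finset ι) :
    (∑' j, if j ∈ s then 0 else f j) + ∑ j ∈ s, f j = ∑' j, f j := by
  have hs : HasSum (fun j => if j ∈ s then f j else 0) (∑ j ∈ s, f j) := by
    simpa using hasSum_sum_of_ne_finset_zero (f := fun j => if j ∈ s then f j else 0)
      (s := s) fun j hj => if_neg hj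
  have hcompl : HasSum (fun j => if j ∈ s then 0 else f j) (∑' j, f j - ∑ j ∈ s, f j) := by
    convert hf.hasSum.sub hs using 1
    ext j
    split_ifs <;> simp
  rw [hcompl.tsum_eq, sub_add_cancel]

theorem abs_mul_pow_le_abs (c : ℝ) {u : ℝ} (hu : |u| ≤ 1) (j : ℕ) : |c * u ^ j| ≤ |c| := by
  rw [abs_mul, abs_pow]
  exact mul_le_of_le_one_right (abs_nonneg c) (pow_le_one₀ (abs_nonneg u) hu)

section PowerSeries

variable {c : ℕ → ℝ}

theorem summable_mul_pow_of_summable_abs (hc : Summable fun j => |c j|) {u : ℝ} (hu : |u| ≤ 1) :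
    Summable fun j => c j * u ^ j :=
  hc.of_norm_bounded fun j => abs_mul_pow_le_abs (c j) hu j

theorem continuousOn_tsum_mul_pow_of_summable_abs (hc : Summable fun j => |c j|) :
    ContinuousOn (fun u => ∑' j, c j * u ^ j) (Icc (-1) 1) :=
  continuousOn_tsum (fun j => by fun_prop) hc
    fun j _ hu => abs_mul_pow_le_abs _ (abs_le.2 hu) j

end PowerSeries

theorem stmt_1_general
    (b : ℕ → ℝ)
    (hb_nonneg : ∀ j : ℕ, j ≠ 1 → 0 ≤ b j)
    (hb_sum : HasSum (fun j : ℕ => if j = 1 then 0 else b j) (-(b 1)))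
    (N : Finset ℕ)
    (hbN : ∀ k ∈ N, 0 < b k)
    (v : ℕ → ℝ) (hv : ∀ j ∈ N, v j ∈ Set.Icc (0 : ℝ) 1) :
    ∃ ρv ρ : ℝ,
      IsLeast {u : ℝ | u ∈ Set.Icc (0 : ℝ) 1 ∧
          (∑' j : ℕ, if j ∈ N then 0 else b j * u ^ j)
            + (∑ j ∈ N, b j * v j * u ^ j) = 0} ρv ∧
      IsLeast {u : ℝ | u ∈ Set.Icc (0 : ℝ) 1 ∧ (∑' j : ℕ, b j * u ^ j) = 0} ρ ∧
      ρv ≤ ρ := by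
  have hb : HasSum b 0 := by
    convert (hasSum_ite_eq 1 (b 1)).add hb_sum using 1
    · ext j; split_ifs <;> simp [*]
    · simp
  have hb_abs : Summable fun j => |b j| := hb.summable.abs
  set B : ℝ → ℝ := fun u => ∑' j, b j * u ^ j
  set G : ℝ → ℝ := fun u =>
    (∑' j, if j ∈ N then 0 else b j * u ^ j) + ∑ j ∈ N, b j * v j * u ^ j
  have hB : ContinuousOn B (Icc 0 1) :=
    (continuousOn_tsum_mul_pow_of_summable_abs hb_abs).mono (Icc_subset_Icc (by norm_num) le_rfl)
  have hG_eq : EqOn G (fun u => B u - ∑ j ∈ N, b j * (1 - v j) * u ^ j) (Icc 0 1) := by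
    intro u hu
    have := tsum_ite_mem_add_sum
      (summable_mul_pow_of_summable_abs hb_abs (abs_le.2 ⟨by linarith [hu.1], hu.2⟩)) N
    simp only [G, B, ← this, mul_sub, sub_mul, mul_one, sum_sub_distrib]
    ring
  have hG : ContinuousOn G (Icc 0 1) := (hB.sub (by fun_prop)).congr hG_eq
  obtain ⟨ρ, hρ⟩ := hB.exists_isLeast_zero (right_mem_Icc.2 zero_le_one) (by simpa [B] using hb.tsum_eq)
  have hGρ : G ρ ≤ 0 := by
    rw [hG_eq hρ.1.1]
    dsimp only
    rw [hρ.1.2, zero_sub, neg_nonpos]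
    exact sum_nonneg fun j hj => mul_nonneg (mul_nonneg (hbN j hj).le (sub_nonneg.2 (hv j hj).2))
      (pow_nonneg hρ.1.1.1 j)
  have hG0 : 0 ≤ G 0 := by
    refine add_nonneg (tsum_nonneg fun j => ?_) (sum_nonneg fun j hj => ?_)
    · rcases eq_or_ne j 1 with rfl | hj
      · simp
      · split_ifs
        exacts [le_rfl, mul_nonneg (hb_nonneg j hj) (pow_nonneg le_rfl j)]
    · exact mul_nonneg (mul_nonneg (hbN j hj).le (hv j hj).1) (pow_nonneg le_rfl j)
  obtain ⟨ρv, hρv, hle⟩ := hG.exists_isLeast_zero_le hG0 hρ.1.1 hGρ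
  exact ⟨ρv, ρ, hρv, hρ, hle⟩

/-- For every `v` with each `v_j ∈ [0,1]`, the set
`{u ∈ [0,1] : B̄_N(u) + B_N(u,v) = 0}` is nonempty and has a least element `ρ(v)`;
moreover `ρ(v) ≤ ρ`, where `ρ` is the least element of `{u ∈ [0,1] : B(u) = 0}`. -/
theorem stmt_1
    (b : ℕ → ℝ)
    (hb_nonneg : ∀ j : ℕ, j ≠ 1 → 0 ≤ b j)
    (hb1 : b 1 < 0)
    (hb_sum : HasSum (fun j : ℕ => if j = 1 then 0 else b j) (-(b 1)))
    (N : Finset ℕ) (hN : N.Nonempty) (h1N : (1 : ℕ) ∉ N)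
    (hbN : ∀ k ∈ N, 0 < b k)
    (v : ℕ → ℝ) (hv : ∀ j ∈ N, v j ∈ Set.Icc (0 : ℝ) 1) :
    ∃ ρv ρ : ℝ,
      IsLeast {u : ℝ | u ∈ Set.Icc (0 : ℝ) 1 ∧
          (∑' j : ℕ, if j ∈ N then 0 else b j * u ^ j)
            + (∑ j ∈ N, b j * v j * u ^ j) = 0} ρv ∧
      IsLeast {u : ℝ | u ∈ Set.Icc (0 : ℝ) 1 ∧ (∑' j : ℕ, b j * u ^ j) = 0} ρ ∧
      ρv ≤ ρ :=
  stmt_1_general b hb_nonneg hb_sum N hbN v hv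
end

section
/- The function v ↦ ρ(v) is infinitely differentiable (C^∞, i.e. ContDiffOn of every order) on the set [0,1)^𝑁 = {v : 0 ≤ v_j < 1 for every j ∈ 𝑁}. -/
open Filter FormalMultilinearSeries Set
open scoped ENNReal NNReal Topology

private lemma analyticOnNhd_tsum_aux {c : ℕ → ℝ} (hc : Summable fun j => |c j|) :
    AnalyticOnNhd ℝ (fun u : ℝ => ∑' j, c j * u ^ j) (Set.Ioo (-1:ℝ) 1) := by
  set p := ofScalars ℝ c with hp
  have hr : (1 : ℝ≥0∞) ≤ p.radius := by
    apply p.le_radius_of_bound (∑' j, |c j|)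
    intro n
    rw [ofScalars_norm]
    simpa using (hc.le_tsum n fun m _ => abs_nonneg _)
  have hball : HasFPowerSeriesOnBall p.sum p 0 p.radius :=
    p.hasFPowerSeriesOnBall (lt_of_lt_of_le one_pos hr)
  have h1 : AnalyticOnNhd ℝ p.sum (Metric.eball 0 p.radius) := hball.analyticOnNhd
  have h2 : AnalyticOnNhd ℝ p.sum (Set.Ioo (-1:ℝ) 1) := by
    apply h1.mono
    intro u hu
    rw [EMetric.mem_ball, edist_zero_right, enorm_eq_nnnorm]
    refine lt_of_lt_of_le ?_ hr
    rw [show ((1:ℝ≥0∞)) = ((1 : ℝ≥0) : ℝ≥0∞) by simp, ENNReal.coe_lt_coe]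
    rw [← NNReal.coe_lt_coe]
    simpa [Real.norm_eq_abs, abs_lt] using hu
  apply h2.congr isOpen_Ioo
  intro u _
  rw [FormalMultilinearSeries.sum]
  congr 1
  ext n
  rw [hp, ofScalars_apply_eq, smul_eq_mul]

private lemma summable_mul_pow_aux {c : ℕ → ℝ} (hc : Summable fun j => |c j|)
    {z : ℝ} (hz : |z| ≤ 1) : Summable fun j => c j * z ^ j := by
  apply Summable.of_norm
  refine hc.of_nonneg_of_le (fun j => norm_nonneg _) fun j => ?_
  rw [Real.norm_eq_abs, abs_mul, abs_pow]
  exact mul_le_of_le_one_right (abs_nonneg _) (pow_le_one₀ (abs_nonneg _) hz)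

private lemma convexOn_tsum_aux {c : ℕ → ℝ} (hc : Summable fun j => |c j|)
    (hpos : ∀ j : ℕ, j ≠ 1 → 0 ≤ c j) :
    ConvexOn ℝ (Set.Icc (0:ℝ) 1) (fun u => ∑' j, c j * u ^ j) := by
  refine ⟨convex_Icc 0 1, fun x hx y hy t s ht hs hts => ?_⟩
  have hxz : |x| ≤ 1 := abs_le.2 ⟨by linarith [hx.1, hx.2], hx.2⟩
  have hyz : |y| ≤ 1 := abs_le.2 ⟨by linarith [hy.1, hy.2], hy.2⟩
  have hz : |t • x + s • y| ≤ 1 := by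
    rw [smul_eq_mul, smul_eq_mul, abs_le]
    constructor <;> nlinarith [hx.1, hx.2, hy.1, hy.2]
  have Sx := summable_mul_pow_aux hc hxz
  have Sy := summable_mul_pow_aux hc hyz
  have Sz := summable_mul_pow_aux hc hz
  simp only [smul_eq_mul] at *
  calc (∑' j, c j * (t * x + s * y) ^ j)
      ≤ ∑' j, (t * (c j * x ^ j) + s * (c j * y ^ j)) := by
        apply Summable.tsum_le_tsum _ Sz ((Sx.mul_left t).add (Sy.mul_left s))
        intro j
        rcases eq_or_ne j 1 with h1 | h1
        · subst h1; simp; ring_nf; rfl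
        · have hcj := hpos j h1
          have hpow : (t * x + s * y) ^ j ≤ t * x ^ j + s * y ^ j := by
            have := (convexOn_pow j).2 (Set.mem_Ici.2 hx.1) (Set.mem_Ici.2 hy.1) ht hs hts
            simpa [smul_eq_mul] using this
          nlinarith [pow_nonneg hx.1 j, pow_nonneg hy.1 j]
    _ = t * (∑' j, c j * x ^ j) + s * (∑' j, c j * y ^ j) := by
        rw [Summable.tsum_add (Sx.mul_left t) (Sy.mul_left s), tsum_mul_left, tsum_mul_left]

private lemma convex_slope_aux {f : ℝ → ℝ} {x y d : ℝ}
    (hf : ConvexOn ℝ (Set.Icc 0 1) f) (hx : x ∈ Set.Icc (0:ℝ) 1)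
    (hy : y ∈ Set.Icc (0:ℝ) 1) (hxy : x < y) (hd : HasDerivAt f d x) :
    d * (y - x) ≤ f y - f x := by
  have T : Tendsto (slope f x) (𝓝[≠] x) (𝓝 d) := hasDerivAt_iff_tendsto_slope.1 hd
  have T' : Tendsto (slope f x) (𝓝[>] x) (𝓝 d) :=
    T.mono_left (nhdsWithin_mono x fun z hz => ne_of_gt hz)
  have hev : ∀ᶠ z in 𝓝[>] x, slope f x z ≤ (f y - f x) / (y - x) := by
    filter_upwards [Ioo_mem_nhdsGT_of_mem (Set.mem_Ico.2 ⟨le_refl x, hxy⟩)] with z hz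
    have hzmem : z ∈ Set.Icc (0:ℝ) 1 := ⟨le_trans hx.1 hz.1.le, le_trans hz.2.le hy.2⟩
    have := hf.secant_mono hx hzmem hy (ne_of_gt hz.1) (ne_of_gt hxy) hz.2.le
    rwa [slope_def_field]
  have : d ≤ (f y - f x) / (y - x) := le_of_tendsto T' hev
  rw [le_div_iff₀ (by linarith)] at this
  linarith

variable (b : ℕ → ℝ) (N : Finset ℕ)

private def ccc (j : ℕ) : ℝ := if j ∈ N then 0 else b j

private noncomputable def fff (u : ℝ) : ℝ := ∑' j, ccc b N j * u ^ j

private noncomputable def PPP (v : {x // x ∈ N} → ℝ) (u : ℝ) : ℝ :=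
  ∑ j : {x // x ∈ N}, b j * v j * u ^ (j : ℕ)

private noncomputable def GGG (v : {x // x ∈ N} → ℝ) (u : ℝ) : ℝ := fff b N u + PPP b N v u

private noncomputable def QQQ (v : {x // x ∈ N} → ℝ) (u : ℝ) : ℝ :=
  ∑ j : {x // x ∈ N}, b j * v j * ((j : ℕ) * u ^ ((j : ℕ) - 1))

private lemma hGeq (v : {x // x ∈ N} → ℝ) (u : ℝ) :
    (∑' j : ℕ, if j ∈ N then 0 else b j * u ^ j)
      + (∑ j : {x // x ∈ N}, b j * v j * u ^ (j : ℕ)) = GGG b N v u := by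
  rw [GGG, fff, PPP]
  congr 1
  apply tsum_congr
  intro j
  by_cases h : j ∈ N <;> simp [ccc, h]

private lemma habs (hb_nonneg : ∀ j : ℕ, j ≠ 1 → 0 ≤ b j)
    (hb_sum : HasSum (fun j : ℕ => if j = 1 then 0 else b j) (-(b 1))) :
    Summable fun j => |b j| := by
  have h1 : Summable fun j : ℕ => if j = 1 then 0 else b j := hb_sum.summable
  have h2 : Summable fun j : ℕ => (if j = 1 then 0 else b j) + (if j = 1 then |b 1| else 0) :=
    h1.add (summable_of_ne_finset_zero (s := {1}) fun j hj => by
      simp only [Finset.mem_singleton] at hj; simp [hj])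
  refine h2.of_nonneg_of_le (fun j => abs_nonneg _) fun j => ?_
  by_cases h : j = 1
  · subst h; simp
  · simp [h, abs_of_nonneg (hb_nonneg j h)]

private lemma hcabs (hb_nonneg : ∀ j : ℕ, j ≠ 1 → 0 ≤ b j)
    (hb_sum : HasSum (fun j : ℕ => if j = 1 then 0 else b j) (-(b 1))) :
    Summable fun j => |ccc b N j| := by
  refine (habs b hb_nonneg hb_sum).of_nonneg_of_le (fun j => abs_nonneg _) fun j => ?_
  by_cases h : j ∈ N <;> simp [ccc, h, abs_nonneg]

private lemma hf0 : fff b N 0 = ccc b N 0 := by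
  rw [fff, tsum_eq_single 0 (fun j hj => by simp [zero_pow hj])]
  simp

private lemma hG0 (hb_nonneg : ∀ j : ℕ, j ≠ 1 → 0 ≤ b j) (h1N : (1:ℕ) ∉ N)
    (hbN : ∀ k ∈ N, 0 < b k) (v : {x // x ∈ N} → ℝ)
    (hv : ∀ j, v j ∈ Set.Icc (0:ℝ) 1) : 0 ≤ GGG b N v 0 := by
  rw [GGG, hf0, PPP]
  have h1 : (0:ℝ) ≤ ccc b N 0 := by
    by_cases h : 0 ∈ N
    · simp [ccc, h]
    · simp only [ccc, if_neg h]
      exact hb_nonneg 0 (by omega)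
  have h2 : (0:ℝ) ≤ ∑ j : {x // x ∈ N}, b j * v j * (0:ℝ) ^ (j:ℕ) := by
    apply Finset.sum_nonneg
    intro j _
    have := (hbN j j.2).le
    have := (hv j).1
    positivity
  linarith

private lemma hf1 (hb_sum : HasSum (fun j : ℕ => if j = 1 then 0 else b j) (-(b 1)))
    (hb_nonneg : ∀ j : ℕ, j ≠ 1 → 0 ≤ b j) (h1N : (1:ℕ) ∉ N) :
    fff b N 1 = -∑ j ∈ N, b j := by
  have hA : Summable fun j : ℕ => if j = 1 then 0 else b j := hb_sum.summable
  have hB : Summable fun j : ℕ => if j = 1 then b 1 else 0 :=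
    summable_of_ne_finset_zero (s := {1}) fun j hj => by
      simp only [Finset.mem_singleton] at hj; simp [hj]
  have hC : Summable fun j : ℕ => if j ∈ N then b j else 0 :=
    summable_of_ne_finset_zero (s := N) fun j hj => by simp [hj]
  have hpt : ∀ j : ℕ, ccc b N j =
      ((if j = 1 then 0 else b j) + (if j = 1 then b 1 else 0)) - (if j ∈ N then b j else 0) := by
    intro j
    by_cases h1 : j = 1
    · subst h1; simp [ccc, h1N]
    · by_cases h2 : j ∈ N <;> simp [ccc, h1, h2]
  rw [fff]
  simp only [one_pow, mul_one]
  rw [tsum_congr hpt, Summable.tsum_sub (hA.add hB) hC, Summable.tsum_add hA hB, hb_sum.tsum_eq,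
    tsum_ite_eq 1 (fun _ => b 1), tsum_eq_sum (s := N) (fun j hj => if_neg hj)]
  rw [Finset.sum_congr rfl fun j hj => if_pos hj]
  ring

private lemma hG1 (hb_sum : HasSum (fun j : ℕ => if j = 1 then 0 else b j) (-(b 1)))
    (hb_nonneg : ∀ j : ℕ, j ≠ 1 → 0 ≤ b j) (h1N : (1:ℕ) ∉ N) (hN : N.Nonempty)
    (hbN : ∀ k ∈ N, 0 < b k) (v : {x // x ∈ N} → ℝ)
    (hv : ∀ j, v j ∈ Set.Ico (0:ℝ) 1) : GGG b N v 1 < 0 := by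
  have : Nonempty {x // x ∈ N} := ⟨⟨hN.choose, hN.choose_spec⟩⟩
  rw [GGG, hf1 b N hb_sum hb_nonneg h1N, PPP]
  simp only [one_pow, mul_one]
  rw [show (∑ j ∈ N, b j) = ∑ j : {x // x ∈ N}, b j from (Finset.sum_coe_sort N b).symm]
  have hlt : (∑ j : {x // x ∈ N}, b ↑j * v j) < ∑ j : {x // x ∈ N}, b ↑j := by
    apply Finset.sum_lt_sum_of_nonempty Finset.univ_nonempty
    intro i _
    have h1 := hbN i i.2
    have h2 := (hv i).2
    nlinarith
  linarith

private lemma hPd (v : {x // x ∈ N} → ℝ) (u : ℝ) :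
    HasDerivAt (PPP b N v) (QQQ b N v u) u := by
  rw [QQQ]
  apply HasDerivAt.fun_sum
  intro j _
  exact (hasDerivAt_pow (j : ℕ) u).const_mul (b j * v j)

private lemma hfa (hb_nonneg : ∀ j : ℕ, j ≠ 1 → 0 ≤ b j)
    (hb_sum : HasSum (fun j : ℕ => if j = 1 then 0 else b j) (-(b 1))) :
    AnalyticOnNhd ℝ (fff b N) (Set.Ioo (-1:ℝ) 1) :=
  analyticOnNhd_tsum_aux (hcabs b N hb_nonneg hb_sum)

private lemma hGd (hb_nonneg : ∀ j : ℕ, j ≠ 1 → 0 ≤ b j)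
    (hb_sum : HasSum (fun j : ℕ => if j = 1 then 0 else b j) (-(b 1)))
    (v : {x // x ∈ N} → ℝ) (u : ℝ) (hu : u ∈ Set.Ioo (-1:ℝ) 1) :
    HasDerivAt (GGG b N v) (deriv (fff b N) u + QQQ b N v u) u := by
  have h1 : HasDerivAt (fff b N) (deriv (fff b N) u) u :=
    ((hfa b N hb_nonneg hb_sum u hu).differentiableAt).hasDerivAt
  exact h1.add (hPd b N v u)

private lemma hQ0 (h1N : (1:ℕ) ∉ N) (v : {x // x ∈ N} → ℝ) : QQQ b N v 0 = 0 := by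
  rw [QQQ]
  apply Finset.sum_eq_zero
  rintro ⟨j, hj⟩ _
  match j with
  | 0 => simp
  | (n+1) =>
    have hn : n ≠ 0 := by rintro rfl; exact h1N hj
    simp [zero_pow hn]

private lemma hfd0 (hb_nonneg : ∀ j : ℕ, j ≠ 1 → 0 ≤ b j)
    (hb_sum : HasSum (fun j : ℕ => if j = 1 then 0 else b j) (-(b 1)))
    (h1N : (1:ℕ) ∉ N) : HasDerivAt (fff b N) (b 1) 0 := by
  have hcs := hcabs b N hb_nonneg hb_sum
  set d : ℕ → ℝ := fun j => if j ≤ 1 then 0 else ccc b N j with hd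
  have hdabs : Summable fun j => |d j| :=
    hcs.of_nonneg_of_le (fun j => abs_nonneg _)
      (fun j => by by_cases h : j ≤ 1 <;> simp [hd, h, abs_nonneg])
  have key : ∀ u : ℝ, |u| ≤ 1 → fff b N u - fff b N 0 - u * b 1 = ∑' j, d j * u ^ j := by
    intro u hu
    have e1 : ∀ j : ℕ, ccc b N j * u ^ j
        = d j * u ^ j + (if j = 0 then ccc b N 0 else if j = 1 then ccc b N 1 * u else 0) := by
      intro j
      match j with
      | 0 => simp [hd]
      | 1 => simp [hd]
      | (n+2) =>
        have : ¬ (n+2 ≤ 1) := by omega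
        simp [hd, this]
    have S1 : Summable fun j => d j * u ^ j := summable_mul_pow_aux hdabs hu
    have S2 : Summable fun j : ℕ =>
        (if j = 0 then ccc b N 0 else if j = 1 then ccc b N 1 * u else 0) :=
      summable_of_ne_finset_zero (s := {0,1}) fun j hj => by
        simp only [Finset.mem_insert, Finset.mem_singleton] at hj
        push_neg at hj
        simp [hj.1, hj.2]
    have hsplit : fff b N u = (∑' j, d j * u ^ j) + (ccc b N 0 + ccc b N 1 * u) := by
      rw [fff, tsum_congr e1, Summable.tsum_add S1 S2]
      congr 1
      rw [tsum_eq_sum (s := ({0,1} : Finset ℕ)) (fun j hj => by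
        simp only [Finset.mem_insert, Finset.mem_singleton] at hj
        push_neg at hj
        simp [hj.1, hj.2])]
      rw [Finset.sum_pair (by norm_num : (0:ℕ) ≠ 1)]
      norm_num
    have hc1 : ccc b N 1 = b 1 := by simp [ccc, h1N]
    rw [hsplit, hf0, hc1]
    ring
  have S3 : ∀ u : ℝ, |u| ≤ 1 → Summable fun j => |d j * u ^ j| := fun u hu =>
    hdabs.of_nonneg_of_le (fun _ => abs_nonneg _) (fun j => by
      rw [abs_mul, abs_pow]
      exact mul_le_of_le_one_right (abs_nonneg _) (pow_le_one₀ (abs_nonneg _) hu))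
  have hb2 : ∀ u : ℝ, |u| ≤ 1 → |fff b N u - fff b N 0 - u * b 1| ≤ (∑' j, |d j|) * u ^ 2 := by
    intro u hu
    rw [key u hu]
    have h1 : |∑' j, d j * u ^ j| ≤ ∑' j, |d j * u ^ j| := by
      simpa only [Real.norm_eq_abs] using
        norm_tsum_le_tsum_norm (f := fun j => d j * u ^ j)
          (by simpa only [Real.norm_eq_abs] using S3 u hu)
    have h2 : (∑' j, |d j * u ^ j|) ≤ ∑' j, |d j| * u ^ 2 := by
      apply Summable.tsum_le_tsum _ (S3 u hu) (hdabs.mul_right _)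
      intro j
      match j with
      | 0 => simp [hd, sq_nonneg]
      | 1 => simp [hd, sq_nonneg]
      | (n+2) =>
        rw [abs_mul, abs_pow]
        apply mul_le_mul_of_nonneg_left _ (abs_nonneg _)
        calc |u| ^ (n+2) ≤ |u| ^ 2 := pow_le_pow_of_le_one (abs_nonneg _) hu (by omega)
          _ = u ^ 2 := sq_abs u
    have h3 : (∑' j, |d j| * u ^ 2) = (∑' j, |d j|) * u ^ 2 := tsum_mul_right
    linarith
  rw [hasDerivAt_iff_isLittleO]
  simp only [sub_zero, smul_eq_mul]
  have hBO : (fun u : ℝ => fff b N u - fff b N 0 - u * b 1) =O[𝓝 (0:ℝ)] (fun u => u ^ 2) := by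
    apply Asymptotics.IsBigO.of_bound (∑' j, |d j|)
    filter_upwards [Metric.ball_mem_nhds (0:ℝ) one_pos] with u hu
    have hu1 : |u| ≤ 1 := by
      rw [Metric.mem_ball, Real.dist_eq, sub_zero] at hu; exact hu.le
    rw [Real.norm_eq_abs, Real.norm_eq_abs, abs_of_nonneg (sq_nonneg u)]
    exact hb2 u hu1
  have hLO : (fun u : ℝ => u ^ 2) =o[𝓝 (0:ℝ)] (fun u => u) := by
    have h1 : (fun u : ℝ => u) =o[𝓝 (0:ℝ)] (fun _ => (1:ℝ)) := by
      rw [Asymptotics.isLittleO_one_iff]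
      exact (continuous_id.tendsto (0:ℝ))
    have h2 := h1.mul_isBigO (Asymptotics.isBigO_refl (fun u : ℝ => u) (𝓝 0))
    simpa [pow_two] using h2
  exact hBO.trans_isLittleO hLO

private lemma hGconvex (hb_nonneg : ∀ j : ℕ, j ≠ 1 → 0 ≤ b j)
    (hb_sum : HasSum (fun j : ℕ => if j = 1 then 0 else b j) (-(b 1)))
    (hbN : ∀ k ∈ N, 0 < b k) (v : {x // x ∈ N} → ℝ)
    (hv : ∀ j, v j ∈ Set.Icc (0:ℝ) 1) :
    ConvexOn ℝ (Set.Icc (0:ℝ) 1) (GGG b N v) := by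
  have h1 : ConvexOn ℝ (Set.Icc (0:ℝ) 1) (fff b N) := by
    apply convexOn_tsum_aux (hcabs b N hb_nonneg hb_sum)
    intro j hj
    by_cases h : j ∈ N
    · simp [ccc, h]
    · simp only [ccc, if_neg h]
      exact hb_nonneg j hj
  have h2 : ∀ t : Finset {x // x ∈ N},
      ConvexOn ℝ (Set.Icc (0:ℝ) 1) (fun u => ∑ j ∈ t, b j * v j * u ^ (j:ℕ)) := by
    intro t
    induction t using Finset.induction with
    | empty => simpa using convexOn_const (0:ℝ) (convex_Icc (0:ℝ) 1)
    | @insert j t hjt ih =>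
      have hterm : ConvexOn ℝ (Set.Icc (0:ℝ) 1) (fun u : ℝ => b j * v j * u ^ (j:ℕ)) := by
        have := ((convexOn_pow (j:ℕ)).subset Set.Icc_subset_Ici_self
          (convex_Icc (0:ℝ) 1)).smul
          (mul_nonneg (hbN j j.2).le (hv j).1)
        simpa [smul_eq_mul] using this
      have := hterm.add ih
      simpa [Finset.sum_insert hjt, Pi.add_def] using this
  have h3 := h2 Finset.univ
  have := h1.add h3
  exact this

private def rootSet (v : {x // x ∈ N} → ℝ) : Set ℝ :=
  {u : ℝ | u ∈ Set.Icc (0:ℝ) 1 ∧ GGG b N v u = 0}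

private lemma lem_A1 (hb_nonneg : ∀ j : ℕ, j ≠ 1 → 0 ≤ b j)
    (hb_sum : HasSum (fun j : ℕ => if j = 1 then 0 else b j) (-(b 1)))
    (h1N : (1:ℕ) ∉ N) (hbN : ∀ k ∈ N, 0 < b k)
    (v : {x // x ∈ N} → ℝ) (hv : ∀ j, v j ∈ Set.Icc (0:ℝ) 1)
    {r : ℝ} (hr : IsLeast (rootSet b N v) r) :
    ∀ u, 0 ≤ u → u < r → 0 < GGG b N v u := by
  intro u hu0 hur
  have hr1 : r ≤ 1 := hr.1.1.2
  have hu1 : u < 1 := lt_of_lt_of_le hur hr1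
  have hrpos : 0 < r := lt_of_le_of_lt hu0 hur
  have hG00 : 0 < GGG b N v 0 := by
    rcases lt_or_eq_of_le (hG0 b N hb_nonneg h1N hbN v hv) with h | h
    · exact h
    · exfalso
      have : r ≤ 0 := hr.2 ⟨⟨le_refl 0, zero_le_one⟩, h.symm⟩
      linarith
  by_contra hle
  push_neg at hle
  have hcont : ContinuousOn (GGG b N v) (Set.Icc 0 u) := by
    intro x hx
    have hx' : x ∈ Set.Ioo (-1:ℝ) 1 := ⟨by linarith [hx.1], lt_of_le_of_lt hx.2 hu1⟩
    exact ((hGd b N hb_nonneg hb_sum v x hx').continuousAt).continuousWithinAt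
  have hiv := intermediate_value_Icc' hu0 hcont
    (⟨hle, hG00.le⟩ : (0:ℝ) ∈ Set.Icc (GGG b N v u) (GGG b N v 0))
  obtain ⟨x, hx, hxval⟩ := hiv
  have : r ≤ x := hr.2 ⟨⟨hx.1, le_trans hx.2 hu1.le⟩, hxval⟩
  linarith [hx.2]

private lemma lem_NEG (hb_nonneg : ∀ j : ℕ, j ≠ 1 → 0 ≤ b j) (hb1 : b 1 < 0)
    (hb_sum : HasSum (fun j : ℕ => if j = 1 then 0 else b j) (-(b 1)))
    (hN : N.Nonempty) (h1N : (1:ℕ) ∉ N) (hbN : ∀ k ∈ N, 0 < b k)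
    (v : {x // x ∈ N} → ℝ) (hv : ∀ j, v j ∈ Set.Ico (0:ℝ) 1)
    {r : ℝ} (hr : IsLeast (rootSet b N v) r)
    {dd : ℝ} (hdd : HasDerivAt (GGG b N v) dd r) : dd < 0 := by
  have hvIcc : ∀ j, v j ∈ Set.Icc (0:ℝ) 1 := fun j => ⟨(hv j).1, (hv j).2.le⟩
  have hG1v : GGG b N v 1 < 0 := hG1 b N hb_sum hb_nonneg h1N hN hbN v hv
  have hroot : GGG b N v r = 0 := hr.1.2
  have hr1 : r < 1 := by
    rcases lt_or_eq_of_le hr.1.1.2 with h | h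
    · exact h
    · exfalso; rw [h] at hroot; linarith
  rcases eq_or_lt_of_le hr.1.1.1 with h0 | h0
  · have h1 : HasDerivAt (GGG b N v) (b 1 + QQQ b N v 0) 0 :=
      (hfd0 b N hb_nonneg hb_sum h1N).add (hPd b N v 0)
    rw [hQ0 b N h1N v, add_zero] at h1
    rw [← h0] at hdd
    rw [hdd.unique h1]
    exact hb1
  · have hdle : dd ≤ 0 := by
      by_contra hpos
      push_neg at hpos
      have T := hasDerivAt_iff_tendsto_slope.mp hdd
      have T' : Tendsto (slope (GGG b N v) r) (𝓝[<] r) (𝓝 dd) :=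
        T.mono_left (nhdsWithin_mono r fun z hz => ne_of_lt hz)
      have ev1 : ∀ᶠ z in 𝓝[<] r, slope (GGG b N v) r z ∈ Set.Ioi (0:ℝ) :=
        T'.eventually (isOpen_Ioi.eventually_mem hpos)
      have ev2 : ∀ᶠ z in 𝓝[<] r, z ∈ Set.Ioo 0 r :=
        Filter.eventually_of_mem (Ioo_mem_nhdsLT_of_mem ⟨h0, le_refl r⟩) (fun x hx => hx)
      obtain ⟨z, hz1, hz2⟩ := (ev1.and ev2).exists
      have hGz : 0 < GGG b N v z :=
        lem_A1 b N hb_nonneg hb_sum h1N hbN v hvIcc hr z hz2.1.le hz2.2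
      rw [slope_def_field, hroot] at hz1
      have hneg : (GGG b N v z - 0) / (z - r) < 0 :=
        div_neg_of_pos_of_neg (by linarith) (by linarith [hz2.2])
      simp only [Set.mem_Ioi] at hz1
      linarith
    rcases lt_or_eq_of_le hdle with h | h
    · exact h
    · exfalso
      have hcv := hGconvex b N hb_nonneg hb_sum hbN v hvIcc
      have hsl := convex_slope_aux hcv ⟨hr.1.1.1, hr.1.1.2⟩
        ⟨zero_le_one, le_refl (1:ℝ)⟩ hr1 hdd
      rw [hroot, ← h] at hsl
      nlinarith

private abbrev VV (N : Finset ℕ) : Type := ({x // x ∈ N} → ℝ)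

/-- The function `v ↦ ρ(v)` is infinitely differentiable (C^∞) on the cube
`[0,1)^N = {v : 0 ≤ v_j < 1 for every j ∈ N}`. -/
theorem stmt_2
    (b : ℕ → ℝ)
    (hb_nonneg : ∀ j : ℕ, j ≠ 1 → 0 ≤ b j)
    (hb1 : b 1 < 0)
    (hb_sum : HasSum (fun j : ℕ => if j = 1 then 0 else b j) (-(b 1)))
    (N : Finset ℕ) (hN : N.Nonempty) (h1N : (1 : ℕ) ∉ N)
    (hbN : ∀ k ∈ N, 0 < b k)
    (ρ : ({x // x ∈ N} → ℝ) → ℝ)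
    (hρ : ∀ v : {x // x ∈ N} → ℝ, (∀ j, v j ∈ Set.Icc (0 : ℝ) 1) →
      IsLeast {u : ℝ | u ∈ Set.Icc (0 : ℝ) 1 ∧
          (∑' j : ℕ, if j ∈ N then 0 else b j * u ^ j)
            + (∑ j : {x // x ∈ N}, b j * v j * u ^ (j : ℕ)) = 0} (ρ v)) :
    ContDiffOn ℝ (⊤ : ℕ∞) ρ {v : {x // x ∈ N} → ℝ | ∀ j, v j ∈ Set.Ico (0 : ℝ) 1} := by
  intro v₀ hv₀s
  have hv₀ : ∀ j, v₀ j ∈ Set.Ico (0:ℝ) 1 := hv₀s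
  have hv₀Icc : ∀ j, v₀ j ∈ Set.Icc (0:ℝ) 1 := fun j => ⟨(hv₀ j).1, (hv₀ j).2.le⟩
  have hLs : ∀ v : VV N, (∀ j, v j ∈ Set.Icc (0:ℝ) 1) → IsLeast (rootSet b N v) (ρ v) := by
    intro v hv
    have h0 := hρ v hv
    have hseteq : {u : ℝ | u ∈ Set.Icc (0:ℝ) 1 ∧
        (∑' j : ℕ, if j ∈ N then 0 else b j * u ^ j)
          + (∑ j : {x // x ∈ N}, b j * v j * u ^ (j:ℕ)) = 0} = rootSet b N v := by
      ext u
      simp only [rootSet, Set.mem_setOf_eq, hGeq b N v u]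
    rwa [hseteq] at h0
  have hr := hLs v₀ hv₀Icc
  have hroot₀ : GGG b N v₀ (ρ v₀) = 0 := hr.1.2
  have hu₀0 : 0 ≤ ρ v₀ := hr.1.1.1
  have hG1v₀ := hG1 b N hb_sum hb_nonneg h1N hN hbN v₀ hv₀
  have hu₀1 : ρ v₀ < 1 := by
    rcases lt_or_eq_of_le hr.1.1.2 with h | h
    · exact h
    · exfalso; rw [h] at hroot₀; linarith
  have hu₀Ioo : ρ v₀ ∈ Set.Ioo (-1:ℝ) 1 := ⟨by linarith, hu₀1⟩
  -- smoothness of Φ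
  have hfcd : ContDiffAt ℝ (⊤ : ℕ∞) (fff b N) (ρ v₀) :=
    (hfa b N hb_nonneg hb_sum (ρ v₀) hu₀Ioo).contDiffAt
  have hΦ₂cd : ContDiffAt ℝ (⊤ : ℕ∞) (fun p : VV N × ℝ => GGG b N p.1 p.2) (v₀, ρ v₀) := by
    have h1 : ContDiffAt ℝ (⊤ : ℕ∞) (fun p : VV N × ℝ => fff b N p.2) (v₀, ρ v₀) :=
      hfcd.comp (v₀, ρ v₀) contDiffAt_snd
    have h2 : ContDiff ℝ (⊤ : ℕ∞) (fun p : VV N × ℝ => PPP b N p.1 p.2) := by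
      simp only [PPP]
      apply ContDiff.sum
      intro j _
      have he : ContDiff ℝ (⊤ : ℕ∞) (fun p : VV N × ℝ => p.1 j) :=
        (ContinuousLinearMap.proj (R := ℝ) (φ := fun _ : {x // x ∈ N} => ℝ) j).contDiff.comp
          contDiff_fst
      exact (contDiff_const.mul he).mul (contDiff_snd.pow _)
    exact h1.add h2.contDiffAt
  have hΦcd : ContDiffAt ℝ (⊤ : ℕ∞) (fun p : VV N × ℝ => (p.1, GGG b N p.1 p.2)) (v₀, ρ v₀) :=
    ContDiffAt.prodMk contDiffAt_fst hΦ₂cd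
  -- the derivative
  have hM : HasFDerivAt (fun p : VV N × ℝ => GGG b N p.1 p.2)
      (fderiv ℝ (fun p : VV N × ℝ => GGG b N p.1 p.2) (v₀, ρ v₀)) (v₀, ρ v₀) :=
    (hΦ₂cd.differentiableAt (by simp)).hasFDerivAt
  set M := fderiv ℝ (fun p : VV N × ℝ => GGG b N p.1 p.2) (v₀, ρ v₀) with hMdef
  have hcurve : HasDerivAt (fun u : ℝ => ((v₀, u) : VV N × ℝ))
      ((0 : VV N), (1:ℝ)) (ρ v₀) := (hasDerivAt_const (ρ v₀) v₀).prodMk (hasDerivAt_id (ρ v₀))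
  have hmder : HasDerivAt (GGG b N v₀) (M ((0 : VV N), (1:ℝ))) (ρ v₀) :=
    hM.comp_hasDerivAt (ρ v₀) hcurve
  have hmneg : M ((0 : VV N), (1:ℝ)) < 0 :=
    lem_NEG b N hb_nonneg hb1 hb_sum hN h1N hbN v₀ hv₀ hr hmder
  have hmne : M ((0 : VV N), (1:ℝ)) ≠ 0 := ne_of_lt hmneg
  have hdecomp : ∀ (w : VV N) (t : ℝ), M (w, t) = M (w, 0) + t * M ((0 : VV N), (1:ℝ)) := by
    intro w t
    have hsplit : ((w, t) : VV N × ℝ) = (w, (0:ℝ)) + t • ((0 : VV N), (1:ℝ)) := by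
      ext <;> simp
    rw [hsplit, map_add, map_smul, smul_eq_mul]
  have hinv1 : Function.LeftInverse
      ((ContinuousLinearMap.fst ℝ (VV N) ℝ).prod
        ((M ((0 : VV N), (1:ℝ)))⁻¹ • (ContinuousLinearMap.snd ℝ (VV N) ℝ
          - M.comp ((ContinuousLinearMap.fst ℝ (VV N) ℝ).prod 0))))
      ((ContinuousLinearMap.fst ℝ (VV N) ℝ).prod M) := by
    rintro ⟨w, t⟩
    apply Prod.ext
    · simp
    · simp only [ContinuousLinearMap.prod_apply, ContinuousLinearMap.coe_fst',
        ContinuousLinearMap.smul_apply, ContinuousLinearMap.sub_apply,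
        ContinuousLinearMap.coe_snd', ContinuousLinearMap.comp_apply,
        ContinuousLinearMap.zero_apply]
      rw [hdecomp w t]
      rw [smul_eq_mul, add_sub_cancel_left]
      field_simp
  have hinv2 : Function.RightInverse
      ((ContinuousLinearMap.fst ℝ (VV N) ℝ).prod
        ((M ((0 : VV N), (1:ℝ)))⁻¹ • (ContinuousLinearMap.snd ℝ (VV N) ℝ
          - M.comp ((ContinuousLinearMap.fst ℝ (VV N) ℝ).prod 0))))
      ((ContinuousLinearMap.fst ℝ (VV N) ℝ).prod M) := by
    rintro ⟨w, t⟩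
    apply Prod.ext
    · simp
    · simp only [ContinuousLinearMap.prod_apply, ContinuousLinearMap.coe_fst',
        ContinuousLinearMap.smul_apply, ContinuousLinearMap.sub_apply,
        ContinuousLinearMap.coe_snd', ContinuousLinearMap.comp_apply,
        ContinuousLinearMap.zero_apply, smul_eq_mul]
      rw [hdecomp w ((M ((0 : VV N), (1:ℝ)))⁻¹ * (t - M (w, 0)))]
      field_simp
      ring
  set eqv : (VV N × ℝ) ≃L[ℝ] (VV N × ℝ) :=
    ContinuousLinearEquiv.equivOfInverse ((ContinuousLinearMap.fst ℝ (VV N) ℝ).prod M) _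
      hinv1 hinv2 with heqvdef
  have hΦ' : HasFDerivAt (fun p : VV N × ℝ => (p.1, GGG b N p.1 p.2))
      (eqv : (VV N × ℝ) →L[ℝ] (VV N × ℝ)) (v₀, ρ v₀) := hasFDerivAt_fst.prodMk hM
  have hΦv₀ : (fun p : VV N × ℝ => (p.1, GGG b N p.1 p.2)) (v₀, ρ v₀) = (v₀, (0:ℝ)) := by
    simp [hroot₀]
  have hred : ((v₀, ρ v₀).1, GGG b N (v₀, ρ v₀).1 (v₀, ρ v₀).2) = ((v₀ : VV N), (0:ℝ)) := by
    simp [hroot₀]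
  have hΨcd : ContDiffAt ℝ (⊤ : ℕ∞) (hΦcd.localInverse hΦ' (by simp)) (v₀, (0:ℝ)) := by
    have := hΦcd.to_localInverse (hf' := hΦ') (hn := (by simp))
    rwa [hred] at this
  have hΨv₀ : hΦcd.localInverse hΦ' (by simp) (v₀, (0:ℝ)) = (v₀, ρ v₀) := by
    rw [← hΦv₀]
    exact hΦcd.localInverse_apply_image hΦ' (by simp)
  have hgcd : ContDiffAt ℝ (⊤ : ℕ∞) (fun v : VV N => (hΦcd.localInverse hΦ' (by simp) (v, (0:ℝ))).2) v₀ := by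
    have h1 : ContDiffAt ℝ (⊤ : ℕ∞) (fun v : VV N => ((v, (0:ℝ)) : VV N × ℝ)) v₀ :=
      ContDiffAt.prodMk contDiffAt_id contDiffAt_const
    exact contDiffAt_snd.comp v₀ (hΨcd.comp v₀ h1)
  set g : VV N → ℝ := fun v => (hΦcd.localInverse hΦ' (by simp) (v, (0:ℝ))).2 with hgdef
  have hg₀ : g v₀ = ρ v₀ := by rw [hgdef]; simp only; rw [hΨv₀]
  have hsfd := hΦcd.hasStrictFDerivAt' hΦ' (by simp)
  have hri : ∀ᶠ y in 𝓝 ((v₀, (0:ℝ)) : VV N × ℝ),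
      (fun p : VV N × ℝ => (p.1, GGG b N p.1 p.2)) (hΦcd.localInverse hΦ' (by simp) y) = y := by
    have h := hsfd.eventually_right_inverse
    rw [hred] at h
    exact h
  have htend : Filter.Tendsto (fun v : VV N => ((v, (0:ℝ)) : VV N × ℝ)) (𝓝 v₀)
      (𝓝 ((v₀, (0:ℝ)) : VV N × ℝ)) :=
    (continuous_id.prodMk continuous_const).tendsto v₀
  have hrootg : ∀ᶠ v in 𝓝 v₀, GGG b N v (g v) = 0 := by
    filter_upwards [htend.eventually hri] with v h
    have h1 := congrArg Prod.fst h
    have h2 := congrArg Prod.snd h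
    simp only at h1 h2
    rw [h1] at h2
    exact h2
  -- negativity of the derivative on a neighborhood
  have hf'cont : ContinuousAt (deriv (fff b N)) (ρ v₀) :=
    (((hfa b N hb_nonneg hb_sum).deriv) (ρ v₀) hu₀Ioo).continuousAt
  have hDcont : ContinuousAt (fun p : VV N × ℝ => deriv (fff b N) p.2 + QQQ b N p.1 p.2)
      (v₀, ρ v₀) := by
    apply ContinuousAt.add
    · exact ContinuousAt.comp (x := ((v₀, ρ v₀) : VV N × ℝ)) hf'cont
        continuous_snd.continuousAt
    · apply Continuous.continuousAt
      show Continuous fun p : VV N × ℝ => QQQ b N p.1 p.2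
      simp only [QQQ]
      apply continuous_finset_sum
      intro j _
      exact (continuous_const.mul ((continuous_apply j).comp continuous_fst)).mul
        (continuous_const.mul ((continuous_pow _).comp continuous_snd))
  have hD₀ : deriv (fff b N) (ρ v₀) + QQQ b N v₀ (ρ v₀) < 0 :=
    lem_NEG b N hb_nonneg hb1 hb_sum hN h1N hbN v₀ hv₀ hr
      (hGd b N hb_nonneg hb_sum v₀ (ρ v₀) hu₀Ioo)
  have hevneg : ∀ᶠ p : VV N × ℝ in 𝓝 (v₀, ρ v₀),
      deriv (fff b N) p.2 + QQQ b N p.1 p.2 < 0 := by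
    have := hDcont.eventually (isOpen_Iio.eventually_mem (show _ ∈ Set.Iio (0:ℝ) from hD₀))
    simpa using this
  obtain ⟨ε, hεpos, hε⟩ := Metric.eventually_nhds_iff.mp hevneg
  set δ := min (ε/2) ((1 - ρ v₀)/2) with hδdef
  have hδpos : 0 < δ := lt_min (by linarith) (by linarith)
  have hδε : δ < ε := lt_of_le_of_lt (min_le_left _ _) (by linarith)
  have hδhalf : δ ≤ (1 - ρ v₀)/2 := min_le_right _ _
  have hδ1 : ρ v₀ + δ < 1 := by linarith
  have hIsub : Set.Icc (ρ v₀ - δ) (ρ v₀ + δ) ⊆ Set.Ioo (-1:ℝ) 1 := by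
    intro x hx
    constructor
    · have : δ < 1 := by linarith
      have := hx.1
      linarith
    · linarith [hx.2]
  have hSA : ∀ v : VV N, dist v v₀ < ε →
      StrictAntiOn (GGG b N v) (Set.Icc (ρ v₀ - δ) (ρ v₀ + δ)) := by
    intro v hv
    apply strictAntiOn_of_deriv_neg (convex_Icc _ _)
    · intro x hx
      exact ((hGd b N hb_nonneg hb_sum v x (hIsub hx)).continuousAt).continuousWithinAt
    · intro x hx
      rw [interior_Icc] at hx
      rw [(hGd b N hb_nonneg hb_sum v x (hIsub (Set.Ioo_subset_Icc_self hx))).deriv]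
      have hdist : dist ((v, x) : VV N × ℝ) (v₀, ρ v₀) < ε := by
        rw [Prod.dist_eq]
        apply max_lt hv
        rw [Real.dist_eq]
        have : |x - ρ v₀| < δ := abs_lt.2 ⟨by linarith [hx.1], by linarith [hx.2]⟩
        linarith
      exact hε hdist
  -- positivity below the window
  obtain ⟨ε₃, hε₃pos, hε₃⟩ : ∃ ε₃ > 0, ∀ v : VV N, dist v v₀ < ε₃ →
      ∀ u, 0 ≤ u → u < ρ v₀ - δ → 0 < GGG b N v u := by
    rcases le_or_gt (ρ v₀ - δ) 0 with hL | hL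
    · refine ⟨1, one_pos, ?_⟩
      intro v _ u hu0 huL
      exfalso; linarith
    · have hC0 : (0:ℝ) ≤ ∑ j : {x // x ∈ N}, |b ↑j| :=
        Finset.sum_nonneg fun j _ => abs_nonneg _
      have hpert : ∀ (v : VV N) (u : ℝ), |u| ≤ 1 →
          |GGG b N v u - GGG b N v₀ u| ≤ (∑ j : {x // x ∈ N}, |b ↑j|) * dist v v₀ := by
        intro v u hu
        have hdiff : GGG b N v u - GGG b N v₀ u
            = ∑ j : {x // x ∈ N}, (b ↑j * u ^ (j:ℕ)) * (v j - v₀ j) := by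
          simp only [GGG, PPP]
          rw [add_sub_add_left_eq_sub, ← Finset.sum_sub_distrib]
          apply Finset.sum_congr rfl
          intro j _
          ring
        rw [hdiff]
        calc |∑ j : {x // x ∈ N}, (b ↑j * u ^ (j:ℕ)) * (v j - v₀ j)|
            ≤ ∑ j : {x // x ∈ N}, |(b ↑j * u ^ (j:ℕ)) * (v j - v₀ j)| :=
              Finset.abs_sum_le_sum_abs _ _
          _ ≤ ∑ j : {x // x ∈ N}, |b ↑j| * dist v v₀ := by
              apply Finset.sum_le_sum
              intro j _
              rw [abs_mul, abs_mul, abs_pow]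
              have h1 : |u| ^ (j:ℕ) ≤ 1 := pow_le_one₀ (abs_nonneg _) hu
              have h2 : |v j - v₀ j| ≤ dist v v₀ := by
                rw [← Real.dist_eq]
                exact dist_le_pi_dist v v₀ j
              have h3 : |b ↑j| * |u| ^ (j:ℕ) ≤ |b ↑j| :=
                mul_le_of_le_one_right (abs_nonneg _) h1
              exact mul_le_mul h3 h2 (abs_nonneg _) (abs_nonneg _)
          _ = (∑ j : {x // x ∈ N}, |b ↑j|) * dist v v₀ := by rw [← Finset.sum_mul]
      have hKcont : ContinuousOn (GGG b N v₀) (Set.Icc (0:ℝ) (ρ v₀ - δ)) := by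
        intro x hx
        have hx' : x ∈ Set.Ioo (-1:ℝ) 1 := ⟨by linarith [hx.1], by linarith [hx.2]⟩
        exact ((hGd b N hb_nonneg hb_sum v₀ x hx').continuousAt).continuousWithinAt
      obtain ⟨xm, hxm, hxmin⟩ := isCompact_Icc.exists_isMinOn
        (Set.nonempty_Icc.2 hL.le) hKcont
      have hmvpos : 0 < GGG b N v₀ xm :=
        lem_A1 b N hb_nonneg hb_sum h1N hbN v₀ hv₀Icc hr xm hxm.1
          (by linarith [hxm.2, hδpos])
      refine ⟨GGG b N v₀ xm / ((∑ j : {x // x ∈ N}, |b ↑j|) + 1), by positivity, ?_⟩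
      intro v hvd u hu0 huL
      have huI : u ∈ Set.Icc (0:ℝ) (ρ v₀ - δ) := ⟨hu0, huL.le⟩
      have h1 : GGG b N v₀ xm ≤ GGG b N v₀ u := hxmin huI
      have h2 := hpert v u (by rw [abs_le]; constructor <;> [linarith; linarith [huI.2]])
      have hC1 : (0:ℝ) < (∑ j : {x // x ∈ N}, |b ↑j|) + 1 := by linarith
      have h3 : (∑ j : {x // x ∈ N}, |b ↑j|) * dist v v₀
          < GGG b N v₀ xm := by
        have hd0 : (0:ℝ) ≤ dist v v₀ := dist_nonneg
        have hq : 0 < GGG b N v₀ xm / ((∑ j : {x // x ∈ N}, |b ↑j|) + 1) := by positivity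
        have hqe : ((∑ j : {x // x ∈ N}, |b ↑j|) + 1)
            * (GGG b N v₀ xm / ((∑ j : {x // x ∈ N}, |b ↑j|) + 1)) = GGG b N v₀ xm := by
          field_simp
        have hkey : (∑ j : {x // x ∈ N}, |b ↑j|)
            * (GGG b N v₀ xm / ((∑ j : {x // x ∈ N}, |b ↑j|) + 1))
            = ((∑ j : {x // x ∈ N}, |b ↑j|) + 1)
            * (GGG b N v₀ xm / ((∑ j : {x // x ∈ N}, |b ↑j|) + 1))
            - GGG b N v₀ xm / ((∑ j : {x // x ∈ N}, |b ↑j|) + 1) := by ring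
        calc (∑ j : {x // x ∈ N}, |b ↑j|) * dist v v₀
            ≤ (∑ j : {x // x ∈ N}, |b ↑j|)
              * (GGG b N v₀ xm / ((∑ j : {x // x ∈ N}, |b ↑j|) + 1)) :=
              mul_le_mul_of_nonneg_left hvd.le hC0
          _ < GGG b N v₀ xm := by rw [hkey, hqe]; linarith
      have h4 := abs_le.1 h2
      linarith [h4.1]
  -- g stays in the window
  have hgnear : ∀ᶠ v in 𝓝 v₀, g v ∈ Set.Ioo (ρ v₀ - δ) (ρ v₀ + δ) := by
    have hmem : g v₀ ∈ Set.Ioo (ρ v₀ - δ) (ρ v₀ + δ) := by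
      rw [hg₀]; exact ⟨by linarith, by linarith⟩
    exact hgcd.continuousAt.eventually (isOpen_Ioo.eventually_mem hmem)
  have hball : ∀ᶠ v in 𝓝 v₀, dist v v₀ < min ε ε₃ := by
    filter_upwards [Metric.ball_mem_nhds v₀ (lt_min hεpos hε₃pos)] with v hv
    simpa [Metric.mem_ball] using hv
  have hfinal : ∀ᶠ v in 𝓝 v₀,
      v ∈ {v : VV N | ∀ j, v j ∈ Set.Ico (0:ℝ) 1} → ρ v = g v := by
    filter_upwards [hball, hrootg, hgnear] with v hd hGg hgI hvs
    have hvIcc : ∀ j, v j ∈ Set.Icc (0:ℝ) 1 := fun j => ⟨(hvs j).1, (hvs j).2.le⟩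
    have hrv := hLs v hvIcc
    have SA := hSA v (lt_of_lt_of_le hd (min_le_left _ _))
    have hg0' : 0 ≤ g v := by
      by_contra hneg
      push_neg at hneg
      have h0I : (0:ℝ) ∈ Set.Icc (ρ v₀ - δ) (ρ v₀ + δ) :=
        ⟨by linarith [hgI.1], by linarith⟩
      have hgvI : g v ∈ Set.Icc (ρ v₀ - δ) (ρ v₀ + δ) := Set.Ioo_subset_Icc_self hgI
      have hlt := SA hgvI h0I hneg
      have h00 := hG0 b N hb_nonneg h1N hbN v hvIcc
      rw [hGg] at hlt
      linarith
    have hg1' : g v ≤ 1 := by linarith [hgI.2]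
    have hgmem : g v ∈ rootSet b N v := ⟨⟨hg0', hg1'⟩, hGg⟩
    have hrg : ρ v ≤ g v := hrv.2 hgmem
    have hr0 : 0 ≤ ρ v := hrv.1.1.1
    have hrroot : GGG b N v (ρ v) = 0 := hrv.1.2
    have hrlow : ρ v₀ - δ ≤ ρ v := by
      by_contra hlow
      push_neg at hlow
      have := hε₃ v (lt_of_lt_of_le hd (min_le_right _ _)) (ρ v) hr0 hlow
      linarith
    have hrI : ρ v ∈ Set.Icc (ρ v₀ - δ) (ρ v₀ + δ) := ⟨hrlow, by linarith [hgI.2]⟩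
    have hgvI : g v ∈ Set.Icc (ρ v₀ - δ) (ρ v₀ + δ) := Set.Ioo_subset_Icc_self hgI
    exact SA.injOn hrI hgvI (by rw [hrroot, hGg])
  have hev2 : ρ =ᶠ[𝓝[{v : VV N | ∀ j, v j ∈ Set.Ico (0:ℝ) 1}] v₀] g := by
    filter_upwards [eventually_nhdsWithin_of_eventually_nhds hfinal,
      self_mem_nhdsWithin] with v h1 h2
    exact h1 h2
  exact (hgcd.contDiffWithinAt).congr_of_eventuallyEq hev2 hg₀.symm
end

section
/- There exists a family (ρ_𝐤)_{𝐤 ∈ ℤ₊^𝑁} of nonnegative real numbers such that for every v ∈ [0,1)^𝑁 the multivariate power series converges with sum Σ_{𝐤 ∈ ℤ₊^𝑁} ρ_𝐤 · ∏_{j∈𝑁} v_j^{k_j} = ρ(v). -/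
/-!
Dividing the equation by `-b 1 > 0`, `ρ v` is the least fixed point in `[0, 1]` of
`u ↦ Σ_{n ≠ 1} (b n / -b 1) θ_n(v) uⁿ`, where `θ_n(v)` (`rootWeight`) is `v n` for `n ∈ N`
and `1` otherwise. In `[0, ∞]` this map is ω-continuous, so by Kleene's theorem its least fixed
point is the supremum of its iterates from `0`. Running the same iteration on formal power series
in `v` with coefficients in `[0, ∞]` produces series with coefficientwise increasing coefficients
whose values are those iterates; by monotone convergence the coefficientwise supremum evaluates
to the least fixed point, and its coefficients are the required family.
-/

open scoped ENNReal
open Finset MvPowerSeries.WithPiTopology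

namespace ENNReal

theorem tsum_iSup_of_monotone {α ι : Type*} [Preorder ι] [IsDirectedOrder ι]
    {f : ι → α → ℝ≥0∞} (hf : Monotone f) :
    ∑' a, ⨆ i, f i a = ⨆ i, ∑' a, f i a := by
  simp_rw [ENNReal.tsum_eq_iSup_sum]
  rw [iSup_comm]
  exact iSup_congr fun s => ENNReal.finsetSum_iSup_of_monotone fun a _ _ h => hf h a

theorem tsum_mul_tsum_eq_tsum_sum_antidiagonal {A : Type*} [AddCommMonoid A]
    [HasAntidiagonal A] (f g : A → ℝ≥0∞) :
    (∑' n, f n) * ∑' n, g n = ∑' n, ∑ p ∈ antidiagonal n, f p.1 * g p.2 := by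
  simp_rw [← ENNReal.tsum_mul_right, ← ENNReal.tsum_mul_left, ← Finset.tsum_subtype]
  rw [← ENNReal.tsum_prod, ← HasAntidiagonal.sigmaAntidiagonalEquivProd.tsum_eq,
    ENNReal.tsum_sigma']
  rfl

noncomputable def tsumPow (c : ℕ → ℝ≥0∞) : ℝ≥0∞ →o ℝ≥0∞ where
  toFun u := ∑' n, c n * u ^ n
  monotone' _ _ h := ENNReal.tsum_le_tsum fun n => mul_le_mul' le_rfl (pow_le_pow_left' h n)

theorem tsumPow_apply (c : ℕ → ℝ≥0∞) (u : ℝ≥0∞) : tsumPow c u = ∑' n, c n * u ^ n :=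
  rfl

theorem ωScottContinuous_tsumPow (c : ℕ → ℝ≥0∞) :
    OmegaCompletePartialOrder.ωScottContinuous (tsumPow c) := by
  refine .of_map_ωSup_of_orderHom fun u => ?_
  change ∑' n, c n * (⨆ i, u i) ^ n = ⨆ i, ∑' n, c n * u i ^ n
  simp_rw [ENNReal.iSup_pow, ENNReal.mul_iSup]
  exact ENNReal.tsum_iSup_of_monotone fun i j h n =>
    mul_le_mul' le_rfl (pow_le_pow_left' (u.monotone h) n)

theorem lfp_eq_ofReal_of_isLeast {f : ℝ≥0∞ →o ℝ≥0∞} {P : ℝ → Prop} {r : ℝ}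
    (hr : IsLeast {u | u ∈ Set.Icc (0 : ℝ) 1 ∧ P u} r)
    (hf : ∀ u ∈ Set.Icc (0 : ℝ) 1, f (ENNReal.ofReal u) = ENNReal.ofReal u ↔ P u) :
    f.lfp = ENNReal.ofReal r := by
  obtain ⟨⟨hr01, hPr⟩, hr_least⟩ := hr
  have hle : f.lfp ≤ ENNReal.ofReal r := f.lfp_le_fixed ((hf r hr01).mpr hPr)
  have hfin : f.lfp ≠ ∞ := ne_top_of_le_ne_top ENNReal.ofReal_ne_top hle
  have hx_le : f.lfp.toReal ≤ r := ENNReal.toReal_le_of_le_ofReal hr01.1 hle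
  have hx01 : f.lfp.toReal ∈ Set.Icc (0 : ℝ) 1 := ⟨ENNReal.toReal_nonneg, hx_le.trans hr01.2⟩
  have hPx : P f.lfp.toReal :=
    (hf _ hx01).mp (by rw [ENNReal.ofReal_toReal hfin]; exact f.map_lfp)
  rw [← le_antisymm hx_le (hr_least ⟨hx01, hPx⟩), ENNReal.ofReal_toReal hfin]

theorem hasSum_toReal_of_tsum_eq_ofReal {α : Type*} {f : α → ℝ≥0∞} {r : ℝ}
    (hr : 0 ≤ r) (h : ∑' a, f a = ENNReal.ofReal r) : HasSum (fun a => (f a).toReal) r := by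
  have hfin : ∑' a, f a ≠ ∞ := h ▸ ENNReal.ofReal_ne_top
  have := ENNReal.hasSum_toReal hfin
  rwa [← ENNReal.tsum_toReal_eq (ENNReal.ne_top_of_tsum_ne_top hfin), h,
    ENNReal.toReal_ofReal hr] at this

end ENNReal

namespace MvPowerSeries

variable {σ : Type*}

noncomputable def ennrealEval (v : σ → ℝ≥0∞) : MvPowerSeries σ ℝ≥0∞ →+* ℝ≥0∞ where
  toFun f := ∑' k, coeff k f * k.prod fun j e => v j ^ e
  map_zero' := by simp
  map_add' f g := by simp only [map_add, add_mul, ENNReal.tsum_add]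
  map_one' := by
    classical
    simp only [coeff_one, ite_mul, one_mul, zero_mul, tsum_ite_eq, Finsupp.prod_zero_index]
  map_mul' f g := by
    classical
    have hprod : ∀ p q : σ →₀ ℕ, ((p + q).prod fun j e => v j ^ e) =
        (p.prod fun j e => v j ^ e) * q.prod fun j e => v j ^ e :=
      fun p q => Finsupp.prod_add_index' (fun _ => pow_zero _) fun _ => pow_add _
    rw [ENNReal.tsum_mul_tsum_eq_tsum_sum_antidiagonal]
    refine tsum_congr fun k => ?_
    rw [coeff_mul, Finset.sum_mul]
    refine Finset.sum_congr rfl fun p hp => ?_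
    rw [← mem_antidiagonal.mp hp, hprod]
    ring

theorem ennrealEval_apply (v : σ → ℝ≥0∞) (f : MvPowerSeries σ ℝ≥0∞) :
    ennrealEval v f = ∑' k, coeff k f * k.prod fun j e => v j ^ e := rfl

@[simp]
theorem ennrealEval_C (v : σ → ℝ≥0∞) (r : ℝ≥0∞) : ennrealEval v (C r) = r := by
  classical
  simp [ennrealEval_apply, coeff_C, ite_mul]

@[simp]
theorem ennrealEval_X (v : σ → ℝ≥0∞) (j : σ) : ennrealEval v (X j) = v j := by
  classical
  simp [ennrealEval_apply, coeff_X, ite_mul]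

theorem coeff_tsum_ennreal {ι : Type*} (f : ι → MvPowerSeries σ ℝ≥0∞) (k : σ →₀ ℕ) :
    coeff k (∑' i, f i) = ∑' i, coeff k (f i) :=
  ((hasSum_iff_hasSum_coeff.mp
    (summable_iff_summable_coeff.mpr fun _ => ENNReal.summable).hasSum) k).tsum_eq.symm

theorem ennrealEval_tsum {ι : Type*} (v : σ → ℝ≥0∞) (f : ι → MvPowerSeries σ ℝ≥0∞) :
    ennrealEval v (∑' i, f i) = ∑' i, ennrealEval v (f i) := by
  simp only [ennrealEval_apply, coeff_tsum_ennreal, ← ENNReal.tsum_mul_right]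
  exact ENNReal.tsum_comm

theorem coeff_mul_mono {f f' g g' : MvPowerSeries σ ℝ≥0∞}
    (hf : ∀ k, coeff k f ≤ coeff k f') (hg : ∀ k, coeff k g ≤ coeff k g') (k : σ →₀ ℕ) :
    coeff k (f * g) ≤ coeff k (f' * g') := by
  classical
  simp only [coeff_mul]
  exact Finset.sum_le_sum fun p _ => mul_le_mul' (hf p.1) (hg p.2)

theorem coeff_pow_mono {f f' : MvPowerSeries σ ℝ≥0∞} (hf : ∀ k, coeff k f ≤ coeff k f')
    (n : ℕ) (k : σ →₀ ℕ) : coeff k (f ^ n) ≤ coeff k (f' ^ n) := by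
  induction n generalizing k with
  | zero => exact le_rfl
  | succ n ih => simpa only [pow_succ] using coeff_mul_mono ih hf k

noncomputable def implicitStep (a : ℕ → MvPowerSeries σ ℝ≥0∞) (f : MvPowerSeries σ ℝ≥0∞) :
    MvPowerSeries σ ℝ≥0∞ :=
  ∑' n, a n * f ^ n

theorem ennrealEval_implicitStep (a : ℕ → MvPowerSeries σ ℝ≥0∞) (v : σ → ℝ≥0∞)
    (f : MvPowerSeries σ ℝ≥0∞) :
    ennrealEval v (implicitStep a f) =
      ENNReal.tsumPow (fun n => ennrealEval v (a n)) (ennrealEval v f) := by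
  simp only [implicitStep, ennrealEval_tsum, map_mul, map_pow, ENNReal.tsumPow_apply]

theorem coeff_implicitStep_mono (a : ℕ → MvPowerSeries σ ℝ≥0∞) {f g : MvPowerSeries σ ℝ≥0∞}
    (h : ∀ k, coeff k f ≤ coeff k g) (k : σ →₀ ℕ) :
    coeff k (implicitStep a f) ≤ coeff k (implicitStep a g) := by
  simp only [implicitStep, coeff_tsum_ennreal]
  exact ENNReal.tsum_le_tsum fun n => coeff_mul_mono (fun _ => le_rfl) (coeff_pow_mono h n) k

theorem monotone_coeff_iterate_implicitStep (a : ℕ → MvPowerSeries σ ℝ≥0∞) :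
    Monotone fun m k => coeff k ((implicitStep a)^[m] 0) := by
  refine monotone_nat_of_le_succ fun m => ?_
  induction m with
  | zero => exact fun k => by simp
  | succ m ih =>
    rw [Function.iterate_succ_apply', Function.iterate_succ_apply']
    exact coeff_implicitStep_mono a ih

theorem ennrealEval_iterate_implicitStep (a : ℕ → MvPowerSeries σ ℝ≥0∞) (v : σ → ℝ≥0∞)
    (m : ℕ) :
    ennrealEval v ((implicitStep a)^[m] 0) =
      (ENNReal.tsumPow fun n => ennrealEval v (a n))^[m] ⊥ := by
  induction m with
  | zero => simp
  | succ m ih => simp only [Function.iterate_succ_apply', ennrealEval_implicitStep, ih]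

theorem exists_coeff_tsum_eq_lfp (a : ℕ → MvPowerSeries σ ℝ≥0∞) :
    ∃ ρ : (σ →₀ ℕ) → ℝ≥0∞, ∀ v : σ → ℝ≥0∞,
      ∑' k, ρ k * (k.prod fun j e => v j ^ e) =
        (ENNReal.tsumPow fun n => ennrealEval v (a n)).lfp := by
  refine ⟨fun k => ⨆ m, coeff k ((implicitStep a)^[m] 0), fun v => ?_⟩
  rw [fixedPoints.lfp_eq_sSup_iterate _ (ENNReal.ωScottContinuous_tsumPow _)]
  simp_rw [← ennrealEval_iterate_implicitStep, ennrealEval_apply, ENNReal.iSup_mul]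
  exact ENNReal.tsum_iSup_of_monotone fun m m' h k =>
    mul_le_mul' (monotone_coeff_iterate_implicitStep a h k) le_rfl

end MvPowerSeries

section ImplicitRoot

open MvPowerSeries

variable (b : ℕ → ℝ) (N : Finset ℕ)

def nonlinearCoeff (n : ℕ) : ℝ :=
  if n = 1 then 0 else b n

noncomputable def rootWeight {R : Type*} [One R] (v : N → R) (n : ℕ) : R :=
  if h : n ∈ N then v ⟨n, h⟩ else 1

noncomputable def rootSeries (n : ℕ) : MvPowerSeries N ℝ≥0∞ :=
  C (ENNReal.ofReal (nonlinearCoeff b n / -b 1)) * rootWeight N X n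

variable {b N}

theorem map_rootWeight {F R S : Type*} [One R] [One S] [FunLike F R S] [OneHomClass F R S]
    (φ : F) (v : N → R) (n : ℕ) : φ (rootWeight N v n) = rootWeight N (fun j => φ (v j)) n := by
  unfold rootWeight
  split <;> simp

theorem rootWeight_mem_Icc {v : N → ℝ} (hv : ∀ j, v j ∈ Set.Icc (0 : ℝ) 1) (n : ℕ) :
    rootWeight N v n ∈ Set.Icc (0 : ℝ) 1 := by
  unfold rootWeight
  split
  · exact hv _
  · exact ⟨zero_le_one, le_rfl⟩

theorem nonlinearCoeff_nonneg (hb_nonneg : ∀ j, j ≠ 1 → 0 ≤ b j) (n : ℕ) :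
    0 ≤ nonlinearCoeff b n := by
  unfold nonlinearCoeff
  split
  · exact le_rfl
  · exact hb_nonneg n ‹_›

theorem rootTerm_mem_Icc (hb_nonneg : ∀ j, j ≠ 1 → 0 ≤ b j) {v : N → ℝ}
    (hv : ∀ j, v j ∈ Set.Icc (0 : ℝ) 1) {u : ℝ} (hu : u ∈ Set.Icc (0 : ℝ) 1) (n : ℕ) :
    nonlinearCoeff b n * rootWeight N v n * u ^ n ∈ Set.Icc 0 (nonlinearCoeff b n) := by
  have hb := nonlinearCoeff_nonneg hb_nonneg n
  obtain ⟨hθ0, hθ1⟩ := rootWeight_mem_Icc hv n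
  refine ⟨mul_nonneg (mul_nonneg hb hθ0) (pow_nonneg hu.1 n), ?_⟩
  calc _ ≤ nonlinearCoeff b n * rootWeight N v n :=
        mul_le_of_le_one_right (mul_nonneg hb hθ0) (pow_le_one₀ hu.1 hu.2)
    _ ≤ _ := mul_le_of_le_one_right hb hθ1

theorem summable_rootTerm (hb_nonneg : ∀ j, j ≠ 1 → 0 ≤ b j)
    (hb_sum : Summable (nonlinearCoeff b)) {v : N → ℝ} (hv : ∀ j, v j ∈ Set.Icc (0 : ℝ) 1)
    {u : ℝ} (hu : u ∈ Set.Icc (0 : ℝ) 1) :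
    Summable fun n => nonlinearCoeff b n * rootWeight N v n * u ^ n :=
  hb_sum.of_nonneg_of_le (fun n => (rootTerm_mem_Icc hb_nonneg hv hu n).1)
    fun n => (rootTerm_mem_Icc hb_nonneg hv hu n).2

theorem tsum_add_sum_eq_tsum_rootWeight (hb_nonneg : ∀ j, j ≠ 1 → 0 ≤ b j)
    (hb_sum : Summable (nonlinearCoeff b)) (h1N : 1 ∉ N)
    {v : N → ℝ} (hv : ∀ j, v j ∈ Set.Icc (0 : ℝ) 1) {u : ℝ} (hu : u ∈ Set.Icc (0 : ℝ) 1) :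
    (∑' j : ℕ, if j ∈ N then 0 else b j * u ^ j) + ∑ j : N, b j * v j * u ^ (j : ℕ) =
      (∑' n, nonlinearCoeff b n * rootWeight N v n * u ^ n) + b 1 * u := by
  set w : ℕ → ℝ := fun n => nonlinearCoeff b n * rootWeight N v n * u ^ n
  have hw : Summable w := summable_rootTerm hb_nonneg hb_sum hv hu
  have hN : HasSum (fun n => if h : n ∈ N then b n * v ⟨n, h⟩ * u ^ n else 0)
      (∑ j : N, b j * v j * u ^ (j : ℕ)) := by
    have : HasSum (fun n => if h : n ∈ N then b n * v ⟨n, h⟩ * u ^ n else 0)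
        (∑ n ∈ N, if h : n ∈ N then b n * v ⟨n, h⟩ * u ^ n else 0) :=
      hasSum_sum_of_ne_finset_zero fun n hn => dif_neg hn
    rwa [Finset.sum_dite_of_true fun _ h => h] at this
  have hsplit : (fun j => if j ∈ N then 0 else b j * u ^ j) =
      fun n => w n + (if n = 1 then b 1 * u else 0) -
        if h : n ∈ N then b n * v ⟨n, h⟩ * u ^ n else 0 := by
    funext n
    by_cases h1 : n = 1
    · subst h1; simp [w, nonlinearCoeff, h1N]
    · by_cases hn : n ∈ N <;> simp [w, nonlinearCoeff, rootWeight, h1, hn]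
  rw [hsplit, ((hw.hasSum.add (hasSum_ite_eq 1 (b 1 * u))).sub hN).tsum_eq]
  ring

theorem ennrealEval_rootSeries_ofReal (hb_nonneg : ∀ j, j ≠ 1 → 0 ≤ b j) (hb1 : b 1 < 0)
    (v : N → ℝ) (n : ℕ) :
    ennrealEval (fun j => ENNReal.ofReal (v j)) (rootSeries b N n) =
      ENNReal.ofReal (nonlinearCoeff b n / -b 1 * rootWeight N v n) := by
  have hc : 0 ≤ nonlinearCoeff b n / -b 1 :=
    div_nonneg (nonlinearCoeff_nonneg hb_nonneg n) (neg_nonneg.mpr hb1.le)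
  rw [rootSeries, map_mul, ennrealEval_C, map_rootWeight, ENNReal.ofReal_mul hc]
  simp only [ennrealEval_X]
  congr 1
  unfold rootWeight
  split <;> simp

theorem tsumPow_rootSeries_eq_iff (hb_nonneg : ∀ j, j ≠ 1 → 0 ≤ b j) (hb1 : b 1 < 0)
    (hb_sum : Summable (nonlinearCoeff b)) (h1N : 1 ∉ N)
    {v : N → ℝ} (hv : ∀ j, v j ∈ Set.Icc (0 : ℝ) 1) {u : ℝ} (hu : u ∈ Set.Icc (0 : ℝ) 1) :
    ENNReal.tsumPow (fun n => ennrealEval (fun j => ENNReal.ofReal (v j)) (rootSeries b N n))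
        (ENNReal.ofReal u) = ENNReal.ofReal u ↔
      (∑' j : ℕ, if j ∈ N then 0 else b j * u ^ j) + ∑ j : N, b j * v j * u ^ (j : ℕ) = 0 := by
  have hβ : 0 < -b 1 := neg_pos.mpr hb1
  set w : ℕ → ℝ := fun n => nonlinearCoeff b n * rootWeight N v n * u ^ n
  have hw0 : ∀ n, 0 ≤ w n / -b 1 := fun n =>
    div_nonneg (rootTerm_mem_Icc hb_nonneg hv hu n).1 hβ.le
  have hw : Summable w := summable_rootTerm hb_nonneg hb_sum hv hu
  have hterm : ∀ n, ennrealEval (fun j => ENNReal.ofReal (v j)) (rootSeries b N n) *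
      ENNReal.ofReal u ^ n = ENNReal.ofReal (w n / -b 1) := fun n => by
    rw [ennrealEval_rootSeries_ofReal hb_nonneg hb1, ← ENNReal.ofReal_pow hu.1,
      ← ENNReal.ofReal_mul (mul_nonneg (div_nonneg (nonlinearCoeff_nonneg hb_nonneg n) hβ.le)
        (rootWeight_mem_Icc hv n).1)]
    congr 1
    ring
  rw [ENNReal.tsumPow_apply, tsum_congr hterm, ← ENNReal.ofReal_tsum_of_nonneg hw0 (hw.div_const _),
    ENNReal.ofReal_eq_ofReal_iff (tsum_nonneg hw0) hu.1, tsum_div_const,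
    tsum_add_sum_eq_tsum_rootWeight hb_nonneg hb_sum h1N hv hu, div_eq_iff hβ.ne']
  constructor <;> intro h <;> linarith

theorem stmt_4_general
    (b : ℕ → ℝ)
    (hb_nonneg : ∀ j : ℕ, j ≠ 1 → 0 ≤ b j)
    (hb1 : b 1 < 0)
    (hb_sum : HasSum (fun j : ℕ => if j = 1 then 0 else b j) (-(b 1)))
    (N : Finset ℕ) (h1N : (1 : ℕ) ∉ N)
    (ρ : ({x // x ∈ N} → ℝ) → ℝ)
    (hρ : ∀ v : {x // x ∈ N} → ℝ, (∀ j, v j ∈ Set.Icc (0 : ℝ) 1) →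
      IsLeast {u : ℝ | u ∈ Set.Icc (0 : ℝ) 1 ∧
          (∑' j : ℕ, if j ∈ N then 0 else b j * u ^ j)
            + (∑ j : {x // x ∈ N}, b j * v j * u ^ (j : ℕ)) = 0} (ρ v)) :
    ∃ ρc : ({x // x ∈ N} → ℕ) → ℝ,
      (∀ k, 0 ≤ ρc k) ∧
      ∀ v : {x // x ∈ N} → ℝ, (∀ j, v j ∈ Set.Ico (0 : ℝ) 1) →
        HasSum (fun k : {x // x ∈ N} → ℕ =>
          ρc k * ∏ j : {x // x ∈ N}, v j ^ k j) (ρ v) := by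
  obtain ⟨ρE, hρE⟩ := MvPowerSeries.exists_coeff_tsum_eq_lfp (rootSeries b N)
  refine ⟨fun k => (ρE (Finsupp.equivFunOnFinite.symm k)).toReal,
    fun k => ENNReal.toReal_nonneg, fun v hv => ?_⟩
  have hv' : ∀ j, v j ∈ Set.Icc (0 : ℝ) 1 := fun j => Set.Ico_subset_Icc_self (hv j)
  have hsum := hρE fun j => ENNReal.ofReal (v j)
  rw [ENNReal.lfp_eq_ofReal_of_isLeast (hρ v hv') fun u hu =>
    tsumPow_rootSeries_eq_iff hb_nonneg hb1 hb_sum.summable h1N hv' hu] at hsum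
  refine Finsupp.equivFunOnFinite.hasSum_iff.mp ?_
  convert ENNReal.hasSum_toReal_of_tsum_eq_ofReal (hρ v hv').1.1.1 hsum using 2 with k
  simp [Finsupp.prod_fintype, ENNReal.toReal_prod, ENNReal.toReal_ofReal (hv' _).1]

/-- There is a family `(ρ_k)_{k ∈ ℤ₊^N}` of nonnegative reals such that for
every `v ∈ [0,1)^N` the multivariate power series converges with sum
`Σ_k ρ_k · ∏_{j∈N} v_j^{k_j} = ρ(v)`. -/
theorem stmt_4
    (b : ℕ → ℝ)
    (hb_nonneg : ∀ j : ℕ, j ≠ 1 → 0 ≤ b j)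
    (hb1 : b 1 < 0)
    (hb_sum : HasSum (fun j : ℕ => if j = 1 then 0 else b j) (-(b 1)))
    (N : Finset ℕ) (hN : N.Nonempty) (h1N : (1 : ℕ) ∉ N)
    (hbN : ∀ k ∈ N, 0 < b k)
    (ρ : ({x // x ∈ N} → ℝ) → ℝ)
    (hρ : ∀ v : {x // x ∈ N} → ℝ, (∀ j, v j ∈ Set.Icc (0 : ℝ) 1) →
      IsLeast {u : ℝ | u ∈ Set.Icc (0 : ℝ) 1 ∧
          (∑' j : ℕ, if j ∈ N then 0 else b j * u ^ j)
            + (∑ j : {x // x ∈ N}, b j * v j * u ^ (j : ℕ)) = 0} (ρ v)) :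
    ∃ ρc : ({x // x ∈ N} → ℕ) → ℝ,
      (∀ k, 0 ≤ ρc k) ∧
      ∀ v : {x // x ∈ N} → ℝ, (∀ j, v j ∈ Set.Ico (0 : ℝ) 1) →
        HasSum (fun k : {x // x ∈ N} → ℕ =>
          ρc k * ∏ j : {x // x ∈ N}, v j ^ k j) (ρ v) :=
  stmt_4_general b hb_nonneg hb1 hb_sum N h1N ρ hρ
end ImplicitRoot
end

section
/- For each k ∈ 𝑁, the right partial derivative of the map v ↦ ρ(v) at v = 0 in the k-th coordinate direction (derivative within the cube [0,1)^𝑁) exists and equals −b_k · ρ(0)^k / B̄_𝑁'(ρ(0)), where B̄_𝑁'(ρ(0)) = Σ_{j∉𝑁, j≥1} j·b_j·ρ(0)^{j−1} < 0; in particular this partial derivative is nonnegative. -/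
/-!
Put `c j = b j` for `j ∉ N` and `c j = 0` otherwise, and `f u = ∑ c j u ^ j`. All coefficients
except the linear one are nonnegative, so `f` is convex on `[0, 1]`, with `f (ρ 0) = 0` and
`f 1 = -∑_{j ∈ N} b j < 0`. Hence `ρ 0 < 1`, `f` is differentiable at `ρ 0`, and
`f' (ρ 0) ≤ slope f (ρ 0) 1 < 0`. On the `k`-th coordinate axis `g s = ρ (s e_k)` satisfies
`f (g s) = -b_k s (g s) ^ k ≤ 0`; convexity forces `ρ 0 ≤ g s ≤ ρ 0 + C s`, so `g` is right
continuous at `0`. Writing `f (g s) - f (ρ 0) = (g s - ρ 0) · dslope f (ρ 0) (g s)` and letting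
`s → 0⁺`, the slope of `g` tends to `-b_k (ρ 0) ^ k / f' (ρ 0)`.
-/

open Set Filter Topology

theorem HasSum.of_ite_eq_zero {ι : Type*} [DecidableEq ι] {b : ι → ℝ} {i : ι} {a : ℝ}
    (h : HasSum (fun j => if j = i then 0 else b j) a) : HasSum b (b i + a) := by
  have hb : Function.update (fun j => if j = i then 0 else b j) i (b i) = b := by
    funext j
    rcases eq_or_ne j i with rfl | hj <;> simp [*]
  simpa [hb] using h.update i (b i)

theorem HasSum.ite_mem_zero {ι : Type*} [DecidableEq ι] {b : ι → ℝ} {a : ℝ} (hb : HasSum b a)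
    (N : Finset ι) : HasSum (fun j => if j ∈ N then 0 else b j) (a - ∑ j ∈ N, b j) := by
  have hN : HasSum (fun j => if j ∈ N then b j else 0) (∑ j ∈ N, b j) := by
    simpa using hasSum_sum_of_ne_finset_zero (f := fun j => if j ∈ N then b j else 0) (s := N)
      (fun j hj => if_neg hj)
  exact (hb.sub hN).congr_fun fun j => by split_ifs <;> simp

theorem hasDerivWithinAt_of_comp_sub_eq_mul {F g h : ℝ → ℝ} {T : Set ℝ} {a d : ℝ}
    (hF : HasDerivAt F d (g a)) (hd : d ≠ 0) (hg : ContinuousWithinAt g T a)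
    (hh : ContinuousWithinAt h T a) (heq : ∀ t ∈ T, F (g t) - F (g a) = (t - a) * h t) :
    HasDerivWithinAt g (h a / d) T a := by
  set q : ℝ → ℝ := fun t => dslope F (g a) (g t)
  have hq : Tendsto q (𝓝[T \ {a}] a) (𝓝 d) := by
    have hcont := (continuousAt_dslope_same.2 hF.differentiableAt).tendsto
    rw [dslope_same, hF.deriv] at hcont
    exact hcont.comp (hg.mono sdiff_subset).tendsto
  rw [hasDerivWithinAt_iff_tendsto_slope]
  refine ((hh.mono sdiff_subset).tendsto.div hq hd).congr' ?_
  filter_upwards [self_mem_nhdsWithin, hq.eventually_ne hd] with t ⟨htT, hta⟩ hqt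
  have key : (g t - g a) * q t = (t - a) * h t := by
    rw [← heq t htT, ← sub_smul_dslope F (g a) (g t), smul_eq_mul]
  rw [Pi.div_apply, slope_def_field, div_eq_div_iff hqt (sub_ne_zero.2 hta), key, mul_comm]

theorem ConvexOn.tsum {E : Type*} [AddCommMonoid E] [Module ℝ E] {ι : Type*} {s : Set E}
    {F : ι → E → ℝ} (hs : Convex ℝ s) (hF : ∀ i, ConvexOn ℝ s (F i))
    (hsum : ∀ x ∈ s, Summable fun i => F i x) : ConvexOn ℝ s fun x => ∑' i, F i x := by
  refine ⟨hs, fun x hx y hy a b ha hb hab => ?_⟩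
  simp only [smul_eq_mul]
  rw [← tsum_mul_left, ← tsum_mul_left,
    ← ((hsum x hx).mul_left a).tsum_add ((hsum y hy).mul_left b)]
  exact (hsum _ (hs hx hy ha hb hab)).tsum_le_tsum (fun i => (hF i).2 hx hy ha hb hab)
    (((hsum x hx).mul_left a).add ((hsum y hy).mul_left b))

theorem convexOn_mul_pow {a : ℝ} {j : ℕ} (ha : j ≠ 1 → 0 ≤ a) :
    ConvexOn ℝ (Ici 0) fun u : ℝ => a * u ^ j := by
  rcases eq_or_ne j 1 with rfl | hj
  · exact ⟨convex_Ici 0, fun x _ y _ p q _ _ _ => le_of_eq (by simp only [smul_eq_mul]; ring)⟩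
  · exact (convexOn_pow j).smul (ha hj)

theorem summable_mul_pow {c : ℕ → ℝ} (hc : Summable c) {u : ℝ} (hu : |u| ≤ 1) :
    Summable fun j => c j * u ^ j :=
  hc.abs.of_norm_bounded fun j => by
    rw [Real.norm_eq_abs, abs_mul, abs_pow]
    exact mul_le_of_le_one_right (abs_nonneg _) (pow_le_one₀ (abs_nonneg u) hu)

theorem convexOn_tsum_mul_pow {c : ℕ → ℝ} (hc : Summable c) (hc_nonneg : ∀ j, j ≠ 1 → 0 ≤ c j) :
    ConvexOn ℝ (Icc 0 1) fun u => ∑' j, c j * u ^ j :=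
  ConvexOn.tsum (convex_Icc 0 1)
    (fun j => (convexOn_mul_pow (hc_nonneg j)).subset Icc_subset_Ici_self (convex_Icc 0 1))
    fun u hu => summable_mul_pow hc (abs_le.2 ⟨by linarith [hu.1], hu.2⟩)

theorem summable_nat_mul_pow_pred {r : ℝ} (hr : |r| < 1) :
    Summable fun n : ℕ => (n : ℝ) * r ^ (n - 1) := by
  refine (summable_nat_add_iff 1).1 ?_
  refine ((summable_pow_mul_geometric_of_norm_lt_one 1 hr).add
    (summable_geometric_of_abs_lt_one hr)).congr fun n => ?_
  push_cast
  simp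
  ring

theorem abs_nat_mul_mul_pow_pred_le {c : ℕ → ℝ} (hc : Summable c) {r y : ℝ} (hy : |y| ≤ r)
    (j : ℕ) :
    |(j : ℝ) * c j * y ^ (j - 1)| ≤ (∑' i, |c i|) * (j * r ^ (j - 1)) := by
  rw [abs_mul, abs_mul, abs_pow, Nat.abs_cast]
  have hcj : |c j| ≤ ∑' i, |c i| := hc.abs.le_tsum j fun i _ => abs_nonneg _
  have hpow : |y| ^ (j - 1) ≤ r ^ (j - 1) := pow_le_pow_left₀ (abs_nonneg y) hy _
  calc (j : ℝ) * |c j| * |y| ^ (j - 1) = |c j| * (j * |y| ^ (j - 1)) := by ring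
    _ ≤ (∑' i, |c i|) * (j * r ^ (j - 1)) := by gcongr

theorem summable_nat_mul_mul_pow_pred {c : ℕ → ℝ} (hc : Summable c) {x : ℝ} (hx : |x| < 1) :
    Summable fun j : ℕ => (j : ℝ) * c j * x ^ (j - 1) :=
  ((summable_nat_mul_pow_pred (by rwa [abs_abs])).mul_left _).of_norm_bounded
    (abs_nat_mul_mul_pow_pred_le hc le_rfl)

theorem hasDerivAt_tsum_mul_pow {c : ℕ → ℝ} (hc : Summable c) {x : ℝ} (hx : |x| < 1) :
    HasDerivAt (fun u => ∑' j, c j * u ^ j) (∑' j : ℕ, (j : ℝ) * c j * x ^ (j - 1)) x := by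
  set r := (1 + |x|) / 2 with hr_def
  have hr : |r| < 1 := by rw [abs_of_pos (by positivity)]; linarith [abs_nonneg x, hr_def]
  have hxr : x ∈ Metric.ball (0 : ℝ) r := by
    rw [Metric.mem_ball, dist_zero_right, Real.norm_eq_abs]; linarith [hr_def]
  refine hasDerivAt_tsum_of_isPreconnected (g := fun j u => c j * u ^ j)
    (g' := fun j y => (j : ℝ) * c j * y ^ (j - 1))
    ((summable_nat_mul_pow_pred hr).mul_left (∑' i, |c i|))
    Metric.isOpen_ball (convex_ball 0 r).isPreconnected (fun j y _ => ?_) (fun j y hy => ?_)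
    hxr (summable_mul_pow hc hx.le) hxr
  · exact ((hasDerivAt_pow j y).const_mul (c j)).congr_deriv (by ring)
  · rw [Metric.mem_ball, dist_zero_right, Real.norm_eq_abs] at hy
    exact abs_nat_mul_mul_pow_pred_le hc hy.le j

section ConvexRoot

variable {s : Set ℝ} {f : ℝ → ℝ} {ρ₀ z : ℝ}

theorem ConvexOn.pos_of_lt_root (hf : ConvexOn ℝ s f) (hz : z ∈ s) (hfρ₀ : f ρ₀ = 0)
    (hfz : f z < 0) (hρ₀z : ρ₀ < z) {x : ℝ} (hx : x ∈ s) (hxρ₀ : x < ρ₀) : 0 < f x := by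
  have h := hf.slope_mono_adjacent hx hz hxρ₀ hρ₀z
  rw [hfρ₀, zero_sub, sub_zero] at h
  have hneg : -f x / (ρ₀ - x) < 0 := h.trans_lt (div_neg_of_neg_of_pos hfz (sub_pos.2 hρ₀z))
  linarith [neg_of_div_neg_left hneg (sub_pos.2 hxρ₀).le]

theorem ConvexOn.neg_of_hasDerivAt_root (hf : ConvexOn ℝ s f) (hρ₀ : ρ₀ ∈ s) (hz : z ∈ s)
    (hfρ₀ : f ρ₀ = 0) (hfz : f z < 0) (hρ₀z : ρ₀ < z) {d : ℝ} (hfd : HasDerivAt f d ρ₀) :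
    d < 0 := by
  have h := hf.le_slope_of_hasDerivAt hρ₀ hz hρ₀z hfd
  rw [slope_def_field, hfρ₀, sub_zero] at h
  exact h.trans_lt (div_neg_of_neg_of_pos hfz (sub_pos.2 hρ₀z))

theorem ConvexOn.hasDerivWithinAt_perturbed_root (hf : ConvexOn ℝ (Icc 0 1) f) {d : ℝ}
    (hfd : HasDerivAt f d ρ₀) (hρ₀ : ρ₀ ∈ Icc 0 1) (hfρ₀ : f ρ₀ = 0) (hf1 : f 1 < 0)
    {β : ℝ} (hβ : 0 ≤ β) (k : ℕ) {T : Set ℝ} (hT : T ⊆ Ici 0) {g : ℝ → ℝ} (hg0 : g 0 = ρ₀)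
    (hg : ∀ s ∈ T, g s ∈ Icc 0 1 ∧ f (g s) + β * s * g s ^ k = 0) :
    HasDerivWithinAt g (-(β * ρ₀ ^ k) / d) T 0 := by
  have h1 : (1 : ℝ) ∈ Icc 0 1 := right_mem_Icc.2 zero_le_one
  have hρ₀1 : ρ₀ < 1 := hρ₀.2.lt_of_ne (by rintro rfl; linarith)
  have hd := hf.neg_of_hasDerivAt_root hρ₀ h1 hfρ₀ hf1 hρ₀1 hfd
  have hβs : ∀ s ∈ T, 0 ≤ β * s * g s ^ k := fun s hs =>
    mul_nonneg (mul_nonneg hβ (hT hs)) (pow_nonneg (hg s hs).1.1 k)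
  have hlower : ∀ s ∈ T, ρ₀ ≤ g s := fun s hs => by
    by_contra! h
    linarith [hf.pos_of_lt_root h1 hfρ₀ hf1 hρ₀1 (hg s hs).1 h, (hg s hs).2, hβs s hs]
  set C := β * (1 - ρ₀) / -f 1
  have hupper : ∀ s ∈ T, g s ≤ ρ₀ + C * s := fun s hs => by
    have hCs : 0 ≤ C * s :=
      mul_nonneg (div_nonneg (mul_nonneg hβ (by linarith)) (by linarith)) (hT hs)
    rcases (hlower s hs).eq_or_lt with h | h
    · linarith
    have hsec := hf.secant_mono hρ₀ (hg s hs).1 h1 h.ne' hρ₀1.ne' (hg s hs).1.2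
    rw [hfρ₀, sub_zero, sub_zero, div_le_div_iff₀ (sub_pos.2 h) (sub_pos.2 hρ₀1)] at hsec
    have hpow : β * s * g s ^ k ≤ β * s := mul_le_of_le_one_right (mul_nonneg hβ (hT hs))
      (pow_le_one₀ (hg s hs).1.1 (hg s hs).1.2)
    have : (g s - ρ₀) * -f 1 ≤ β * (1 - ρ₀) * s := by nlinarith [(hg s hs).2]
    have hΔ : g s - ρ₀ ≤ C * s := by rwa [div_mul_eq_mul_div, le_div_iff₀ (by linarith)]
    linarith
  have hcont : ContinuousWithinAt g T 0 := by
    have hlin : Tendsto (fun s => ρ₀ + C * s) (𝓝[T] 0) (𝓝 ρ₀) := by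
      have h := ((by fun_prop : Continuous fun s => ρ₀ + C * s).tendsto 0).mono_left
        (nhdsWithin_le_nhds (s := T))
      rwa [mul_zero, add_zero] at h
    rw [ContinuousWithinAt, hg0]
    exact tendsto_of_tendsto_of_tendsto_of_le_of_le' tendsto_const_nhds hlin
      (eventually_nhdsWithin_of_forall hlower) (eventually_nhdsWithin_of_forall hupper)
  have hcont' : ContinuousWithinAt (fun s => -(β * g s ^ k)) T 0 :=
    ((hcont.pow k).const_mul β).neg
  have key := hasDerivWithinAt_of_comp_sub_eq_mul (hg0 ▸ hfd) hd.ne hcont hcont' fun s hs => by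
    rw [hg0, hfρ₀]; linarith [(hg s hs).2]
  simpa [hg0] using key

end ConvexRoot

theorem hasDerivWithinAt_perturbed_root_tsum_mul_pow {c : ℕ → ℝ} {σ : ℝ} (hc : HasSum c σ)
    (hσ : σ < 0) (hc_nonneg : ∀ j, j ≠ 1 → 0 ≤ c j) {ρ₀ : ℝ} (hρ₀ : ρ₀ ∈ Icc 0 1)
    (hfρ₀ : ∑' j, c j * ρ₀ ^ j = 0) {β : ℝ} (hβ : 0 ≤ β) (k : ℕ) {T : Set ℝ} (hT : T ⊆ Ici 0)
    {g : ℝ → ℝ} (hg0 : g 0 = ρ₀)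
    (hg : ∀ s ∈ T, g s ∈ Icc 0 1 ∧ ∑' j, c j * g s ^ j + β * s * g s ^ k = 0) :
    ∃ d, HasSum (fun j : ℕ => (j : ℝ) * c j * ρ₀ ^ (j - 1)) d ∧ d < 0 ∧
      HasDerivWithinAt g (-(β * ρ₀ ^ k) / d) T 0 := by
  set f : ℝ → ℝ := fun u => ∑' j, c j * u ^ j
  have hf1 : f 1 < 0 := by simpa [f, hc.tsum_eq] using hσ
  have hρ₀1 : ρ₀ < 1 := hρ₀.2.lt_of_ne (by rintro rfl; exact hf1.ne hfρ₀)
  have hρ₀abs : |ρ₀| < 1 := abs_lt.2 ⟨by linarith [hρ₀.1], hρ₀1⟩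
  have hconv : ConvexOn ℝ (Icc 0 1) f := convexOn_tsum_mul_pow hc.summable hc_nonneg
  have hfd := hasDerivAt_tsum_mul_pow hc.summable hρ₀abs
  exact ⟨_, (summable_nat_mul_mul_pow_pred hc.summable hρ₀abs).hasSum,
    hconv.neg_of_hasDerivAt_root hρ₀ (right_mem_Icc.2 zero_le_one) hfρ₀ hf1 hρ₀1 hfd,
    hconv.hasDerivWithinAt_perturbed_root hfd hρ₀ hfρ₀ hf1 hβ k hT hg0 hg⟩

theorem stmt_5_general
    (b : ℕ → ℝ)
    (hb_nonneg : ∀ j : ℕ, j ≠ 1 → 0 ≤ b j)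
    (hb_sum : HasSum (fun j : ℕ => if j = 1 then 0 else b j) (-(b 1)))
    (N : Finset ℕ)
    (hbN : ∀ k ∈ N, 0 < b k)
    (ρ : ({x // x ∈ N} → ℝ) → ℝ)
    (hρ : ∀ v : {x // x ∈ N} → ℝ, (∀ j, v j ∈ Set.Icc (0 : ℝ) 1) →
      IsLeast {u : ℝ | u ∈ Set.Icc (0 : ℝ) 1 ∧
          (∑' j : ℕ, if j ∈ N then 0 else b j * u ^ j)
            + (∑ j : {x // x ∈ N}, b j * v j * u ^ (j : ℕ)) = 0} (ρ v))
    (k : {x // x ∈ N}) :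
    ∃ d : ℝ,
      HasSum (fun j : ℕ =>
        if j ∉ N ∧ 1 ≤ j then (j : ℝ) * b j * (ρ 0) ^ (j - 1) else 0) d ∧
      d < 0 ∧
      HasDerivWithinAt (fun s : ℝ => ρ (fun j => if j = k then s else 0))
        (-(b k * (ρ 0) ^ (k : ℕ)) / d) (Set.Ico (0 : ℝ) 1) 0 ∧
      0 ≤ -(b k * (ρ 0) ^ (k : ℕ)) / d := by
  set c : ℕ → ℝ := fun j => if j ∈ N then 0 else b j
  have hb : HasSum b 0 := by simpa using hb_sum.of_ite_eq_zero
  have hc : HasSum c (-∑ j ∈ N, b j) := by simpa using hb.ite_mem_zero N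
  have hroot : ∀ v : {x // x ∈ N} → ℝ, (∀ j, v j ∈ Icc 0 1) →
      ρ v ∈ Icc 0 1 ∧
        ∑' j, c j * ρ v ^ j + ∑ j : {x // x ∈ N}, b j * v j * ρ v ^ (j : ℕ) = 0 := by
    simpa only [c, ite_mul, zero_mul, mem_ofPred_eq] using fun v hv => (hρ v hv).1
  obtain ⟨hρ₀, hfρ₀⟩ := hroot 0 fun _ => ⟨le_rfl, zero_le_one⟩
  obtain ⟨d, hd_sum, hd, hderiv⟩ := hasDerivWithinAt_perturbed_root_tsum_mul_pow hc
    (g := fun s => ρ fun j => if j = k then s else 0)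
    (neg_neg_of_pos (Finset.sum_pos hbN ⟨k, k.2⟩))
    (fun j hj => by by_cases hjN : j ∈ N <;> simp [c, hjN, hb_nonneg j hj])
    hρ₀ (by simpa using hfρ₀) (hbN k k.2).le k Ico_subset_Ici_self (by simp only [ite_self]; rfl)
    fun s hs => by
      obtain ⟨hmem, heq⟩ := hroot (fun j => if j = k then s else 0) fun j => by
        split_ifs
        exacts [⟨hs.1, hs.2.le⟩, ⟨le_rfl, zero_le_one⟩]
      exact ⟨hmem, by simpa [ite_mul, mul_ite] using heq⟩
  refine ⟨d, hd_sum.congr_fun fun j => ?_, hd, hderiv,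
    div_nonneg_of_nonpos (neg_nonpos.2 (mul_nonneg (hbN k k.2).le (pow_nonneg hρ₀.1 _))) hd.le⟩
  rcases Nat.eq_zero_or_pos j with rfl | hj
  · simp
  · by_cases hjN : j ∈ N <;> simp [c, hjN, Nat.one_le_iff_ne_zero.2 hj.ne']

/-- For each `k ∈ N`, the right partial derivative of `v ↦ ρ(v)` at `v = 0`
in the `k`-th coordinate direction (derivative within the cube `[0,1)^N`) exists and equals
`−b_k · ρ(0)^k / B̄_N'(ρ(0))`, where `B̄_N'(ρ(0)) = Σ_{j∉N, j≥1} j·b_j·ρ(0)^{j−1} < 0`;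
in particular this partial derivative is nonnegative. -/
theorem stmt_5
    (b : ℕ → ℝ)
    (hb_nonneg : ∀ j : ℕ, j ≠ 1 → 0 ≤ b j)
    (hb1 : b 1 < 0)
    (hb_sum : HasSum (fun j : ℕ => if j = 1 then 0 else b j) (-(b 1)))
    (N : Finset ℕ) (hN : N.Nonempty) (h1N : (1 : ℕ) ∉ N)
    (hbN : ∀ k ∈ N, 0 < b k)
    (ρ : ({x // x ∈ N} → ℝ) → ℝ)
    (hρ : ∀ v : {x // x ∈ N} → ℝ, (∀ j, v j ∈ Set.Icc (0 : ℝ) 1) →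
      IsLeast {u : ℝ | u ∈ Set.Icc (0 : ℝ) 1 ∧
          (∑' j : ℕ, if j ∈ N then 0 else b j * u ^ j)
            + (∑ j : {x // x ∈ N}, b j * v j * u ^ (j : ℕ)) = 0} (ρ v))
    (k : {x // x ∈ N}) :
    ∃ d : ℝ,
      HasSum (fun j : ℕ =>
        if j ∉ N ∧ 1 ≤ j then (j : ℝ) * b j * (ρ 0) ^ (j - 1) else 0) d ∧
      d < 0 ∧
      HasDerivWithinAt (fun s : ℝ => ρ (fun j => if j = k then s else 0))
        (-(b k * (ρ 0) ^ (k : ℕ)) / d) (Set.Ico (0 : ℝ) 1) 0 ∧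
      0 ≤ -(b k * (ρ 0) ^ (k : ℕ)) / d :=
  stmt_5_general b hb_nonneg hb_sum N hbN ρ hρ k
end

section
/- For every v ∈ [0,1)^𝑁 and every u ∈ [0,1], there exists exactly one differentiable function y : [0,∞) → ℝ with 0 ≤ y(t) ≤ 1 for all t ≥ 0, y(0) = u, and y'(t) = B_𝑁(y(t), v) + B̄_𝑁(y(t)) for all t ≥ 0. -/
/-!
With `cⱼ = bⱼ vⱼ` for `j ∈ 𝑁` and `cⱼ = bⱼ` otherwise, the right-hand side is the power series
`F(x) = Σ cⱼ xʲ`, where `Σ |cⱼ| < ∞`, `F(0) = c₀ ≥ 0` and `F(1) = Σ bⱼ + Σ_{j ∈ 𝑁} bⱼ (vⱼ - 1) < 0`.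
Hence `F` is continuous on `[0, 1]` and, being analytic on `(-1, 1)`, Lipschitz on every `[0, r]`
with `r < 1`, but possibly not near `1`. Below `1` Cauchy-Lipschitz applies, and the signs of `F`
at `0` and near `1` trap solutions in `[0, 1]`. Near `1`, where `F < 0`, separation of variables
takes over: a solution `y` staying there satisfies `T(y(t)) = t` for the strictly monotone travel
time `T(x) = ∫_{y(0)}^x ds / F(s)`, which gives existence and uniqueness for a short time when
`y(0) = 1`. At every positive time a solution is below `1`, since otherwise `1` would be an interior
maximum of `y` while `y' = F(1) ≠ 0`.
-/

open Set Filter Topology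
open scoped NNReal

namespace FormalMultilinearSeries

variable {c : ℕ → ℝ}

theorem continuousOn_ofScalarsSum_Icc (hc : Summable fun n => |c n|) :
    ContinuousOn (ofScalarsSum (E := ℝ) c) (Icc (-1) 1) := by
  rw [ofScalarsSum_eq_tsum]
  refine continuousOn_tsum (fun n => by fun_prop) hc fun n x hx => ?_
  rw [smul_eq_mul, norm_mul, norm_pow, Real.norm_eq_abs, Real.norm_eq_abs]
  exact mul_le_of_le_one_right (abs_nonneg _) (pow_le_one₀ (abs_nonneg x) (abs_le.2 hx))

theorem exists_lipschitzOnWith_ofScalarsSum (hc : Summable fun n => |c n|) {r : ℝ} (hr : r < 1) :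
    ∃ K, LipschitzOnWith K (ofScalarsSum (E := ℝ) c) (Icc (-r) r) := by
  have hrad : 1 ≤ (ofScalars ℝ c).radius := by
    simpa using (ofScalars ℝ c).le_radius_of_summable_norm (r := 1) (by simpa using hc)
  have hsub : Icc (-r) r ⊆ Metric.eball 0 (ofScalars ℝ c).radius := fun x hx => by
    refine lt_of_lt_of_le ?_ hrad
    rw [edist_zero_right, ← ofReal_norm, ENNReal.ofReal_lt_one, Real.norm_eq_abs]
    exact (abs_le.2 hx).trans_lt hr
  exact (((ofScalars ℝ c).hasFPowerSeriesOnBall (zero_lt_one.trans_le hrad)).analyticOnNhd.mono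
    hsub).contDiffOn_of_completeSpace.exists_lipschitzOnWith (n := 1) one_ne_zero (convex_Icc _ _)
    isCompact_Icc

end FormalMultilinearSeries

section IntegralCurve

variable {E : Type*} [NormedAddCommGroup E] [NormedSpace ℝ E]

theorem exists_isIntegralCurveOn_Ici_of_lipschitzWith [CompleteSpace E] {G : E → E} {K M : ℝ≥0}
    (hG : LipschitzWith K G) (hM : ∀ x, ‖G x‖ ≤ M) (t₀ : ℝ) (x₀ : E) :
    ∃ γ : ℝ → E, γ t₀ = x₀ ∧ IsIntegralCurveOn γ (fun _ => G) (Ici t₀) := by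
  have hPL (n : ℕ) : IsPicardLindelof (fun _ => G) (tmin := t₀) (tmax := t₀ + n)
      ⟨t₀, le_rfl, by simp⟩ x₀ (M * n) 0 M K :=
    .of_time_independent (fun x _ => hM x) hG.lipschitzOnWith (by simp)
  choose α hα₀ hα using fun n => (hPL n).exists_eq_forall_mem_Icc_hasDerivWithinAt₀
  have hagree {n m : ℕ} (hnm : n ≤ m) : EqOn (α n) (α m) (Icc t₀ (t₀ + n)) := by
    have hsub : Icc t₀ (t₀ + n) ⊆ Icc t₀ (t₀ + m) := Icc_subset_Icc_right (by gcongr)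
    refine ODE_solution_unique (v := fun _ => G) (fun _ => hG)
      (fun t ht => (hα n t ht).continuousWithinAt) (fun t ht => ?_)
      (fun t ht => ((hα m t (hsub ht)).continuousWithinAt.mono hsub)) (fun t ht => ?_)
      (by rw [hα₀, hα₀])
    · exact (hα n t (Ico_subset_Icc_self ht)).mono_of_mem_nhdsWithin (Icc_mem_nhdsGE_of_mem ht)
    · exact (hα m t (hsub (Ico_subset_Icc_self ht))).mono_of_mem_nhdsWithin
        (Icc_mem_nhdsGE_of_mem ⟨ht.1, ht.2.trans_le (by gcongr)⟩)
  refine ⟨fun t => α ⌈t - t₀⌉₊ t, by simp [hα₀], fun t (ht : t₀ ≤ t) => ?_⟩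
  have hγ (n : ℕ) : EqOn (fun t => α ⌈t - t₀⌉₊ t) (α n) (Icc t₀ (t₀ + n)) := fun s hs =>
    hagree (Nat.ceil_le.2 (by linarith [hs.2])) ⟨hs.1, by linarith [Nat.le_ceil (s - t₀)]⟩
  set n := ⌈t - t₀⌉₊ + 1
  have htn : t < t₀ + n := by simp only [n]; push_cast; linarith [Nat.le_ceil (t - t₀)]
  have hmem : Icc t₀ (t₀ + n) ∈ 𝓝[Ici t₀] t := by
    rw [← Ici_inter_Iic]; exact inter_mem_nhdsWithin _ (Iic_mem_nhds htn)
  rw [hγ n ⟨ht, htn.le⟩]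
  exact ((hα n t ⟨ht, htn.le⟩).congr (hγ n) (hγ n ⟨ht, htn.le⟩)).mono_of_mem_nhdsWithin hmem

theorem IsIntegralCurveOn.ite_le {γ₁ γ₂ : ℝ → E} {v : ℝ → E → E} {a b : ℝ}
    (h₁ : IsIntegralCurveOn γ₁ v (Icc a b)) (h₂ : IsIntegralCurveOn γ₂ v (Ici b))
    (hb : γ₁ b = γ₂ b) : IsIntegralCurveOn (fun t => if t ≤ b then γ₁ t else γ₂ t) v (Ici a) := by
  set γ := fun t => if t ≤ b then γ₁ t else γ₂ t
  have e₁ : EqOn γ γ₁ (Icc a b) := fun t ht => if_pos ht.2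
  have e₂ : EqOn γ γ₂ (Ici b) := fun t (ht : b ≤ t) => by
    rcases ht.eq_or_lt with rfl | h
    · exact (if_pos le_rfl).trans hb
    · exact if_neg h.not_ge
  intro t (ht : a ≤ t)
  rcases lt_trichotomy t b with h | rfl | h
  · rw [e₁ ⟨ht, h.le⟩]
    refine ((h₁ t ⟨ht, h.le⟩).congr e₁ (e₁ ⟨ht, h.le⟩)).mono_of_mem_nhdsWithin ?_
    rw [← Ici_inter_Iic]; exact inter_mem_nhdsWithin _ (Iic_mem_nhds h)
  · have h₁' := (h₁ t ⟨ht, le_rfl⟩).congr e₁ (e₁ ⟨ht, le_rfl⟩)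
    have h₂' := (h₂ t self_mem_Ici).congr e₂ (e₂ self_mem_Ici)
    rw [e₁ ⟨ht, le_rfl⟩]
    rw [← hb] at h₂'
    exact (h₁'.union h₂').mono fun s (hs : a ≤ s) => (le_total s t).imp (fun h => ⟨hs, h⟩) id
  · rw [e₂ h.le]
    exact ((h₂ t h.le).congr e₂ (e₂ h.le)).mono_of_mem_nhdsWithin
      (mem_nhdsWithin_of_mem_nhds (Ici_mem_nhds h))

end IntegralCurve

theorem image_le_of_deriv_right_nonpos_of_gt {f f' : ℝ → ℝ} {a b c : ℝ}
    (hf : ContinuousOn f (Icc a b)) (hf' : ∀ x ∈ Ico a b, HasDerivWithinAt f (f' x) (Ici x) x)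
    (ha : f a ≤ c) (hc : ∀ x ∈ Ico a b, c < f x → f' x ≤ 0) :
    ∀ ⦃x⦄, x ∈ Icc a b → f x ≤ c := by
  intro x hx
  -- compare `f` with the barriers `c + δ (y - a + 1)` of positive slope `δ`, then let `δ → 0`
  refine le_of_forall_pos_le_add fun ε hε => ?_
  have hx₁ : 0 < x - a + 1 := by linarith [hx.1]
  set δ := ε / (x - a + 1)
  have hδ : 0 < δ := div_pos hε hx₁
  have hB (y : ℝ) : HasDerivAt (fun y => c + δ * (y - a + 1)) δ y := by
    simpa using (((hasDerivAt_id y).sub_const a).add_const 1).const_mul δ |>.const_add c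
  have := image_le_of_deriv_right_lt_deriv_boundary hf hf' (by nlinarith) hB
    (fun y hy hfy => (hc y hy (by rw [hfy]; nlinarith [hy.1])).trans_lt hδ) hx
  calc f x ≤ c + δ * (x - a + 1) := this
    _ = c + ε := by rw [div_mul_cancel₀ _ hx₁.ne']

theorem IsIntegralCurveOn.le_of_forall_gt_nonpos {G : ℝ → ℝ} {γ : ℝ → ℝ} {t₀ b : ℝ}
    (hγ : IsIntegralCurveOn γ (fun _ => G) (Ici t₀)) (hG : ∀ x, b < x → G x ≤ 0)
    (h₀ : γ t₀ ≤ b) {t : ℝ} (ht : t₀ ≤ t) : γ t ≤ b :=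
  image_le_of_deriv_right_nonpos_of_gt (hγ.continuousOn.mono Icc_subset_Ici_self)
    (fun _ hs => (hγ _ hs.1).mono (Ici_subset_Ici.2 hs.1)) h₀ (fun _ _ => hG _) ⟨ht, le_rfl⟩

theorem IsIntegralCurveOn.mapsTo_Icc {G : ℝ → ℝ} {γ : ℝ → ℝ} {t₀ a b : ℝ}
    (hγ : IsIntegralCurveOn γ (fun _ => G) (Ici t₀)) (ha : ∀ x, x < a → 0 ≤ G x)
    (hb : ∀ x, b < x → G x ≤ 0) (h₀ : γ t₀ ∈ Icc a b) : MapsTo γ (Ici t₀) (Icc a b) := by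
  have hneg : IsIntegralCurveOn (-γ) (fun _ x => -G (-x)) (Ici t₀) := fun t ht => by
    simpa using (hγ t ht).neg
  refine fun t ht => ⟨?_, hγ.le_of_forall_gt_nonpos hb h₀.2 ht⟩
  have := hneg.le_of_forall_gt_nonpos (b := -a) (fun x hx => by simpa using ha (-x) (by linarith))
    (by simpa using h₀.1) ht
  simpa using this

theorem exists_isIntegralCurveOn_Ici_mapsTo_Icc {f : ℝ → ℝ} {a b : ℝ} (hab : a ≤ b) {K : ℝ≥0}
    (hK : LipschitzOnWith K f (Icc a b)) (ha : 0 ≤ f a) (hb : f b ≤ 0) (t₀ : ℝ) {x₀ : ℝ}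
    (hx₀ : x₀ ∈ Icc a b) :
    ∃ γ : ℝ → ℝ, γ t₀ = x₀ ∧ MapsTo γ (Ici t₀) (Icc a b) ∧
      IsIntegralCurveOn γ (fun _ => f) (Ici t₀) := by
  set G : ℝ → ℝ := fun x => f (projIcc a b hab x)
  have hG : LipschitzWith (K * 1) G := hK.to_restrict.comp (LipschitzWith.projIcc hab)
  obtain ⟨C, hC⟩ := isCompact_Icc.exists_bound_of_continuousOn hK.continuousOn
  obtain ⟨γ, hγ₀, hγ⟩ := exists_isIntegralCurveOn_Ici_of_lipschitzWith hG
    (M := C.toNNReal) (fun x => (hC _ (projIcc a b hab x).2).trans (Real.le_coe_toNNReal C)) t₀ x₀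
  have hmaps : MapsTo γ (Ici t₀) (Icc a b) := hγ.mapsTo_Icc
    (fun x hx => by simpa [G, projIcc_of_le_left hab hx.le] using ha)
    (fun x hx => by simpa [G, projIcc_of_right_le hab hx.le] using hb) (hγ₀ ▸ hx₀)
  refine ⟨γ, hγ₀, hmaps, fun t ht => ?_⟩
  simpa [G, projIcc_of_mem hab (hmaps ht)] using hγ t ht

theorem IsIntegralCurveOn.lt_of_forall_le {f y : ℝ → ℝ} {t₀ t c : ℝ}
    (hy : IsIntegralCurveOn y (fun _ => f) (Ici t₀)) (hle : ∀ s, t₀ ≤ s → y s ≤ c)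
    (hc : f c ≠ 0) (ht : t₀ < t) : y t < c := by
  refine (hle t ht.le).lt_of_ne fun h => hc ?_
  have hmax : IsLocalMax y t := by
    filter_upwards [Ici_mem_nhds ht] with s hs
    exact h ▸ hle s hs
  exact h ▸ hmax.hasDerivAt_eq_zero ((hy t ht.le).hasDerivAt (Ici_mem_nhds ht))

/-- The time a solution of `y' = g(y)` takes to go from `x₀` to `x`, where `g` has no zero. -/
noncomputable def travelTime (g : ℝ → ℝ) (x₀ x : ℝ) : ℝ := ∫ s in x₀..x, (g s)⁻¹

section SeparationOfVariables

variable {g : ℝ → ℝ} (hg : Continuous g) (hneg : ∀ x, g x < 0)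
include hg hneg

theorem hasDerivAt_travelTime (x₀ x : ℝ) : HasDerivAt (travelTime g x₀) (g x)⁻¹ x :=
  ((hg.inv₀ fun x => (hneg x).ne).integral_hasStrictDerivAt x₀ x).hasDerivAt

theorem strictAnti_travelTime (x₀ : ℝ) : StrictAnti (travelTime g x₀) :=
  strictAnti_of_deriv_neg fun x => by
    rw [(hasDerivAt_travelTime hg hneg x₀ x).deriv]; exact inv_lt_zero.2 (hneg x)

theorem travelTime_eq_sub {y : ℝ → ℝ} {a b : ℝ} (hyc : ContinuousOn y (Icc a b))
    (hy : ∀ t ∈ Ico a b, HasDerivWithinAt y (g (y t)) (Ici t) t) :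
    ∀ t ∈ Icc a b, travelTime g (y a) (y t) = t - a := by
  have hT : Continuous (travelTime g (y a)) :=
    continuous_iff_continuousAt.2 fun x => (hasDerivAt_travelTime hg hneg _ x).continuousAt
  refine eq_of_has_deriv_right_eq (f' := fun _ => 1) (fun t ht => ?_)
    (fun t _ => ((hasDerivAt_id t).sub_const a).hasDerivWithinAt) (hT.comp_continuousOn hyc)
    (by fun_prop) (by simp [travelTime])
  have := (hasDerivAt_travelTime hg hneg (y a) (y t)).comp_hasDerivWithinAt t (hy t ht)
  rwa [inv_mul_cancel₀ (hneg (y t)).ne] at this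

theorem eqOn_Icc_of_hasDerivWithinAt_of_neg {y₁ y₂ : ℝ → ℝ} {a b : ℝ}
    (hc₁ : ContinuousOn y₁ (Icc a b))
    (hy₁ : ∀ t ∈ Ico a b, HasDerivWithinAt y₁ (g (y₁ t)) (Ici t) t)
    (hc₂ : ContinuousOn y₂ (Icc a b))
    (hy₂ : ∀ t ∈ Ico a b, HasDerivWithinAt y₂ (g (y₂ t)) (Ici t) t)
    (ha : y₁ a = y₂ a) : EqOn y₁ y₂ (Icc a b) := fun t ht =>
  (strictAnti_travelTime hg hneg (y₁ a)).injective <| by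
    rw [travelTime_eq_sub hg hneg hc₁ hy₁ t ht, ha, travelTime_eq_sub hg hneg hc₂ hy₂ t ht]

theorem surjective_travelTime (hbdd : BddBelow (range g)) (x₀ : ℝ) :
    Function.Surjective (travelTime g x₀) := by
  have hT := hasDerivAt_travelTime hg hneg x₀
  obtain ⟨M, hM⟩ := hbdd
  have hgM (x : ℝ) : M ≤ g x := hM ⟨x, rfl⟩
  have hM0 : M⁻¹ < 0 := inv_lt_zero.2 ((hgM 0).trans_lt (hneg 0))
  -- the slope of the travel time is at most `M⁻¹ < 0`, so it is squeezed by a line through `x₀`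
  have hslope : ∀ x y, x ≤ y → travelTime g x₀ y - travelTime g x₀ x ≤ M⁻¹ * (y - x) :=
    image_sub_le_mul_sub_of_deriv_le (fun x => (hT x).differentiableAt) fun x => by
      rw [(hT x).deriv]; exact (inv_le_inv_of_neg (hneg x) (inv_lt_zero.1 hM0)).2 (hgM x)
  have hT₀ : travelTime g x₀ x₀ = 0 := intervalIntegral.integral_same
  refine Continuous.surjective' (continuous_iff_continuousAt.2 fun x => (hT x).continuousAt)
    (tendsto_atTop_mono' _ ?_
      ((tendsto_atBot_add_const_right _ (-x₀) tendsto_id).const_mul_atBot_of_neg hM0))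
    (tendsto_atBot_mono' _ ?_
      ((tendsto_atTop_add_const_right _ (-x₀) tendsto_id).const_mul_atTop_of_neg hM0))
  · filter_upwards [eventually_le_atBot x₀] with y hy
    simp only [id]; linarith [hslope y x₀ hy]
  · filter_upwards [eventually_ge_atTop x₀] with y hy
    simp only [id]; linarith [hslope x₀ y hy]

theorem exists_isIntegralCurve_of_neg (hbdd : BddBelow (range g)) (x₀ : ℝ) :
    ∃ Y : ℝ → ℝ, Y 0 = x₀ ∧ StrictAnti Y ∧ IsIntegralCurve Y (fun _ => g) := by
  set T := travelTime g x₀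
  have hTanti : StrictAnti T := strictAnti_travelTime hg hneg x₀
  have hsurj := surjective_travelTime hg hneg hbdd x₀
  set Y := Function.surjInv hsurj
  have hTY : ∀ t, T (Y t) = t := Function.surjInv_eq hsurj
  have hYT : ∀ x, Y (T x) = x := fun x => hTanti.injective (hTY _)
  have hYanti : StrictAnti Y := fun s t hst => by
    rw [← hTanti.lt_iff_gt, hTY, hTY]; exact hst
  have hYcont : Continuous Y := by
    have : Continuous fun t => Y (-t) := Monotone.continuous_of_surjective
      (fun s t hst => hYanti.antitone (neg_le_neg hst)) fun x => ⟨-T x, by simp [hYT]⟩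
    simpa [Function.comp_def] using this.comp continuous_neg
  refine ⟨Y, hTanti.injective (by rw [hTY]; exact intervalIntegral.integral_same.symm), hYanti,
    fun t => ?_⟩
  simpa using (hasDerivAt_travelTime hg hneg x₀ (Y t)).of_local_left_inverse hYcont.continuousAt
    (inv_ne_zero (hneg _).ne) (Eventually.of_forall hTY)

end SeparationOfVariables

namespace UnitIntervalODE

variable {f : ℝ → ℝ}

theorem exists_eqOn_Icc_neg (hcont : ContinuousOn f (Icc 0 1)) (h1 : f 1 < 0) :
    ∃ a ∈ Ico (0 : ℝ) 1, ∃ g : ℝ → ℝ,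
      Continuous g ∧ (∀ x, g x < 0) ∧ BddBelow (range g) ∧ EqOn f g (Icc a 1) := by
  have := hcont 1 (right_mem_Icc.2 zero_le_one) (Iio_mem_nhds h1)
  rw [nhdsWithin_Icc_eq_nhdsLE zero_lt_one] at this
  obtain ⟨l, hl, hsub⟩ := mem_nhdsLE_iff_exists_Icc_subset.1 this
  set a := max l 0
  have ha1 : a < 1 := max_lt hl zero_lt_one
  have hfa : ContinuousOn f (Icc a 1) := hcont.mono (Icc_subset_Icc_left (le_max_right _ _))
  have hproj (x : ℝ) : (projIcc a 1 ha1.le x : ℝ) ∈ Icc a 1 := (projIcc a 1 ha1.le x).2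
  obtain ⟨C, hC⟩ := isCompact_Icc.exists_bound_of_continuousOn hfa
  refine ⟨a, ⟨le_max_right _ _, ha1⟩, fun x => f (projIcc a 1 ha1.le x),
    hfa.comp_continuous continuous_projIcc.subtype_val hproj,
    fun x => hsub ⟨le_of_max_le_left (hproj x).1, (hproj x).2⟩,
    ⟨-C, by rintro _ ⟨x, rfl⟩; exact neg_le_of_abs_le (hC _ (hproj x))⟩,
    fun x hx => by simp [projIcc_of_mem _ hx]⟩

theorem exists_isIntegralCurveOn_of_lt_one (hcont : ContinuousOn f (Icc 0 1))
    (hlip : ∀ r < 1, ∃ K, LipschitzOnWith K f (Icc 0 r)) (h0 : 0 ≤ f 0) (h1 : f 1 < 0)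
    (t₀ : ℝ) {x₀ : ℝ} (hx₀ : x₀ ∈ Ico 0 1) :
    ∃ y : ℝ → ℝ, y t₀ = x₀ ∧ MapsTo y (Ici t₀) (Icc 0 1) ∧
      IsIntegralCurveOn y (fun _ => f) (Ici t₀) := by
  obtain ⟨a, ha, g, -, hgneg, -, hfg⟩ := exists_eqOn_Icc_neg hcont h1
  have hb : max x₀ a ∈ Icc a 1 := ⟨le_max_right _ _, (max_lt hx₀.2 ha.2).le⟩
  obtain ⟨K, hK⟩ := hlip _ (max_lt hx₀.2 ha.2)
  obtain ⟨y, hy₀, hmaps, hy⟩ := exists_isIntegralCurveOn_Ici_mapsTo_Icc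
    (hx₀.1.trans (le_max_left _ _)) hK h0 (hfg hb ▸ hgneg _).le t₀ ⟨hx₀.1, le_max_left _ _⟩
  exact ⟨y, hy₀, hmaps.mono_right (Icc_subset_Icc_right hb.2), hy⟩

theorem exists_isIntegralCurveOn_of_eq_one (hcont : ContinuousOn f (Icc 0 1))
    (hlip : ∀ r < 1, ∃ K, LipschitzOnWith K f (Icc 0 r)) (h0 : 0 ≤ f 0) (h1 : f 1 < 0) :
    ∃ y : ℝ → ℝ, y 0 = 1 ∧ MapsTo y (Ici 0) (Icc 0 1) ∧
      IsIntegralCurveOn y (fun _ => f) (Ici 0) := by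
  obtain ⟨a, ha, g, hg, hgneg, hgbdd, hfg⟩ := exists_eqOn_Icc_neg hcont h1
  obtain ⟨Y, hY₀, hYanti, hY⟩ := exists_isIntegralCurve_of_neg hg hgneg hgbdd 1
  obtain ⟨τ, hYτ, hτ⟩ : ∃ τ, a < Y τ ∧ 0 < τ :=
    (((hY 0).continuousAt.eventually (lt_mem_nhds (hY₀ ▸ ha.2))).filter_mono
      nhdsWithin_le_nhds |>.and self_mem_nhdsWithin).exists (f := 𝓝[>] (0 : ℝ))
  have hYmem : ∀ t ∈ Icc 0 τ, Y t ∈ Icc a 1 := fun t ht =>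
    ⟨hYτ.le.trans (hYanti.antitone ht.2), hY₀ ▸ hYanti.antitone ht.1⟩
  obtain ⟨w, hw₀, hwmaps, hw⟩ := exists_isIntegralCurveOn_of_lt_one hcont hlip h0 h1 τ
    ⟨ha.1.trans hYτ.le, hY₀ ▸ hYanti hτ⟩
  refine ⟨fun t => if t ≤ τ then Y t else w t, by simp [hτ.le, hY₀], fun t (ht : 0 ≤ t) => ?_,
    IsIntegralCurveOn.ite_le (fun t ht => ?_) hw hw₀.symm⟩
  · by_cases htτ : t ≤ τ
    · simpa [htτ] using Icc_subset_Icc_left ha.1 (hYmem t ⟨ht, htτ⟩)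
    · simpa [htτ] using hwmaps (le_of_not_ge htτ)
  · simpa [hfg (hYmem t ht)] using (hY t).hasDerivWithinAt

theorem exists_isIntegralCurveOn (hcont : ContinuousOn f (Icc 0 1))
    (hlip : ∀ r < 1, ∃ K, LipschitzOnWith K f (Icc 0 r)) (h0 : 0 ≤ f 0) (h1 : f 1 < 0)
    {u : ℝ} (hu : u ∈ Icc 0 1) :
    ∃ y : ℝ → ℝ, y 0 = u ∧ MapsTo y (Ici 0) (Icc 0 1) ∧
      IsIntegralCurveOn y (fun _ => f) (Ici 0) := by
  rcases hu.2.lt_or_eq with hu1 | rfl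
  · exact exists_isIntegralCurveOn_of_lt_one hcont hlip h0 h1 0 ⟨hu.1, hu1⟩
  · exact exists_isIntegralCurveOn_of_eq_one hcont hlip h0 h1

theorem eqOn_Icc_of_mapsTo_Ico (hlip : ∀ r < 1, ∃ K, LipschitzOnWith K f (Icc 0 r))
    {y₁ y₂ : ℝ → ℝ} {t₀ a b : ℝ} (hy₁ : IsIntegralCurveOn y₁ (fun _ => f) (Ici t₀))
    (hy₂ : IsIntegralCurveOn y₂ (fun _ => f) (Ici t₀)) (ha : t₀ ≤ a)
    (hm₁ : MapsTo y₁ (Icc a b) (Ico 0 1)) (hm₂ : MapsTo y₂ (Icc a b) (Ico 0 1))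
    (heq : y₁ a = y₂ a) : EqOn y₁ y₂ (Icc a b) := by
  rcases lt_or_ge b a with hba | hab
  · rw [Icc_eq_empty_of_lt hba]; exact eqOn_empty _ _
  have hsub : Icc a b ⊆ Ici t₀ := fun t ht => ha.trans ht.1
  have hc₁ : ContinuousOn y₁ (Icc a b) := hy₁.continuousOn.mono hsub
  have hc₂ : ContinuousOn y₂ (Icc a b) := hy₂.continuousOn.mono hsub
  -- by compactness both solutions stay in some `[0, r]` with `r < 1`, where `f` is Lipschitz
  obtain ⟨s, hs, hmax⟩ := isCompact_Icc.exists_isMaxOn (nonempty_Icc.2 hab) (hc₁.sup hc₂)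
  set r := max (y₁ s) (y₂ s)
  obtain ⟨K, hK⟩ := hlip r (max_lt (hm₁ hs).2 (hm₂ hs).2)
  have hmem {y : ℝ → ℝ} (hm : MapsTo y (Icc a b) (Ico 0 1)) (hle : ∀ t ∈ Icc a b, y t ≤ r) :
      ∀ t ∈ Ico a b, y t ∈ Icc 0 r := fun t ht =>
    ⟨(hm (Ico_subset_Icc_self ht)).1, hle t (Ico_subset_Icc_self ht)⟩
  refine ODE_solution_unique_of_mem_Icc_right (v := fun _ => f) (fun _ _ => hK) hc₁
    (fun t ht => (hy₁ t (hsub (Ico_subset_Icc_self ht))).mono (Ici_subset_Ici.2 ?_))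
    (hmem hm₁ fun t ht => (le_max_left _ (y₂ t)).trans (hmax ht)) hc₂
    (fun t ht => (hy₂ t (hsub (Ico_subset_Icc_self ht))).mono (Ici_subset_Ici.2 ?_))
    (hmem hm₂ fun t ht => (le_max_right (y₁ t) _).trans (hmax ht)) heq
  all_goals exact ha.trans ht.1

theorem exists_eqOn_of_eq_one (hcont : ContinuousOn f (Icc 0 1)) (h1 : f 1 < 0)
    {y₁ y₂ : ℝ → ℝ} (hy₁ : IsIntegralCurveOn y₁ (fun _ => f) (Ici 0))
    (hy₂ : IsIntegralCurveOn y₂ (fun _ => f) (Ici 0))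
    (hm₁ : MapsTo y₁ (Ici 0) (Icc 0 1)) (hm₂ : MapsTo y₂ (Ici 0) (Icc 0 1))
    (h₁ : y₁ 0 = 1) (h₂ : y₂ 0 = 1) : ∃ δ > 0, EqOn y₁ y₂ (Icc 0 δ) := by
  obtain ⟨a, ha, g, hg, hgneg, -, hfg⟩ := exists_eqOn_Icc_neg hcont h1
  have hnear {y : ℝ → ℝ} (hy : IsIntegralCurveOn y (fun _ => f) (Ici 0)) (h : y 0 = 1) :
      ∀ᶠ t in 𝓝[≥] 0, a < y t :=
    (hy 0 self_mem_Ici).continuousWithinAt.eventually (lt_mem_nhds (h ▸ ha.2))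
  obtain ⟨δ, hδ, hsub⟩ := mem_nhdsGE_iff_exists_Icc_subset.1 ((hnear hy₁ h₁).and (hnear hy₂ h₂))
  have hsol {y : ℝ → ℝ} (hy : IsIntegralCurveOn y (fun _ => f) (Ici 0))
      (hm : MapsTo y (Ici 0) (Icc 0 1)) (ha : ∀ t ∈ Icc 0 δ, a < y t) :
      ∀ t ∈ Ico 0 δ, HasDerivWithinAt y (g (y t)) (Ici t) t := fun t ht => by
    rw [← hfg ⟨(ha t (Ico_subset_Icc_self ht)).le, (hm ht.1).2⟩]
    exact (hy t ht.1).mono (Ici_subset_Ici.2 ht.1)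
  exact ⟨δ, hδ, eqOn_Icc_of_hasDerivWithinAt_of_neg hg hgneg
    (hy₁.continuousOn.mono Icc_subset_Ici_self) (hsol hy₁ hm₁ fun t ht => (hsub ht).1)
    (hy₂.continuousOn.mono Icc_subset_Ici_self) (hsol hy₂ hm₂ fun t ht => (hsub ht).2)
    (h₁.trans h₂.symm)⟩

theorem eqOn_Ici_of_isIntegralCurveOn (hcont : ContinuousOn f (Icc 0 1))
    (hlip : ∀ r < 1, ∃ K, LipschitzOnWith K f (Icc 0 r)) (h1 : f 1 < 0)
    {y₁ y₂ : ℝ → ℝ} (hy₁ : IsIntegralCurveOn y₁ (fun _ => f) (Ici 0))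
    (hy₂ : IsIntegralCurveOn y₂ (fun _ => f) (Ici 0))
    (hm₁ : MapsTo y₁ (Ici 0) (Icc 0 1)) (hm₂ : MapsTo y₂ (Ici 0) (Icc 0 1))
    (heq : y₁ 0 = y₂ 0) : EqOn y₁ y₂ (Ici 0) := by
  obtain ⟨δ, hδ, hEq, hδ1⟩ : ∃ δ, 0 ≤ δ ∧ EqOn y₁ y₂ (Icc 0 δ) ∧ y₁ δ < 1 := by
    rcases (hm₁ self_mem_Ici).2.lt_or_eq with h | h
    · exact ⟨0, le_rfl, by simpa [Icc_self] using heq, h⟩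
    · obtain ⟨δ, hδ, hE⟩ := exists_eqOn_of_eq_one hcont h1 hy₁ hy₂ hm₁ hm₂ h (heq ▸ h)
      exact ⟨δ, hδ.le, hE, hy₁.lt_of_forall_le (fun s hs => (hm₁ hs).2) (h ▸ h1.ne) hδ⟩
  have hlt {y : ℝ → ℝ} (hy : IsIntegralCurveOn y (fun _ => f) (Ici 0))
      (hm : MapsTo y (Ici 0) (Icc 0 1)) (hyδ : y δ < 1) (t : ℝ) :
      MapsTo y (Icc δ t) (Ico 0 1) := fun s hs =>
    ⟨(hm (hδ.trans hs.1)).1, hs.1.eq_or_lt.elim (fun h => h ▸ hyδ)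
      fun h => hy.lt_of_forall_le (fun s hs => (hm hs).2) h1.ne (hδ.trans_lt h)⟩
  intro t (ht : 0 ≤ t)
  rcases le_total t δ with htδ | hδt
  · exact hEq ⟨ht, htδ⟩
  · exact eqOn_Icc_of_mapsTo_Ico hlip hy₁ hy₂ hδ (hlt hy₁ hm₁ hδ1 t)
      (hlt hy₂ hm₂ (hEq ⟨hδ, le_rfl⟩ ▸ hδ1) t) (hEq ⟨hδ, le_rfl⟩) ⟨hδt, le_rfl⟩

end UnitIntervalODE

noncomputable def dampedCoeff (N : Finset ℕ) (b v : ℕ → ℝ) (j : ℕ) : ℝ :=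
  if j ∈ N then b j * v j else b j

section DampedCoeff

open FormalMultilinearSeries

variable {N : Finset ℕ} {b v : ℕ → ℝ}

theorem abs_dampedCoeff_le (hv : ∀ j ∈ N, v j ∈ Ico (0 : ℝ) 1) (j : ℕ) :
    |dampedCoeff N b v j| ≤ |b j| := by
  unfold dampedCoeff
  split_ifs with hj
  · rw [abs_mul, abs_of_nonneg (hv j hj).1]
    exact mul_le_of_le_one_right (abs_nonneg _) (hv j hj).2.le
  · exact le_rfl

theorem ofScalarsSum_dampedCoeff (hb : Summable b) {x : ℝ} (hx : |x| ≤ 1) :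
    ofScalarsSum (E := ℝ) (dampedCoeff N b v) x =
      ∑ j ∈ N, b j * v j * x ^ j + ∑' j, if j ∈ N then 0 else b j * x ^ j := by
  have hs : Summable fun j => if j ∈ N then 0 else b j * x ^ j := by
    refine hb.abs.of_norm_bounded fun j => ?_
    split_ifs
    · simp
    · rw [Real.norm_eq_abs, abs_mul, abs_pow]
      exact mul_le_of_le_one_right (abs_nonneg _) (pow_le_one₀ (abs_nonneg x) hx)
  have hfin : HasSum (fun j => if j ∈ N then b j * v j * x ^ j else 0)
      (∑ j ∈ N, b j * v j * x ^ j) := by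
    rw [← Finset.sum_congr rfl fun j hj => if_pos hj]
    exact hasSum_sum_of_ne_finset_zero fun j hj => if_neg hj
  rw [ofScalars_sum_eq, ((hfin.add hs.hasSum).congr_fun fun j => ?_).tsum_eq]
  unfold dampedCoeff
  split_ifs <;> simp [smul_eq_mul]

theorem ofScalarsSum_dampedCoeff_zero_nonneg (hb0 : 0 ≤ b 0) (hv : ∀ j ∈ N, v j ∈ Ico (0 : ℝ) 1) :
    0 ≤ ofScalarsSum (E := ℝ) (dampedCoeff N b v) 0 := by
  rw [ofScalarsSum_zero, smul_eq_mul, mul_one, dampedCoeff]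
  split_ifs with h0
  · exact mul_nonneg hb0 (hv 0 h0).1
  · exact hb0

theorem ofScalarsSum_dampedCoeff_one_neg (hb : HasSum b 0) (hN : N.Nonempty)
    (hbN : ∀ k ∈ N, 0 < b k) (hv : ∀ j ∈ N, v j ∈ Ico (0 : ℝ) 1) :
    ofScalarsSum (E := ℝ) (dampedCoeff N b v) 1 < 0 := by
  have hfin : HasSum (fun j => if j ∈ N then b j * (v j - 1) else 0)
      (∑ j ∈ N, b j * (v j - 1)) := by
    rw [← Finset.sum_congr rfl fun j hj => if_pos hj]
    exact hasSum_sum_of_ne_finset_zero fun j hj => if_neg hj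
  have hsum : HasSum (fun j => dampedCoeff N b v j • (1 : ℝ) ^ j) (∑ j ∈ N, b j * (v j - 1)) := by
    refine zero_add (∑ j ∈ N, b j * (v j - 1)) ▸ (hb.add hfin).congr_fun fun j => ?_
    unfold dampedCoeff; split_ifs <;> simp; ring
  rw [ofScalars_sum_eq, hsum.tsum_eq]
  exact Finset.sum_neg (fun j hj => mul_neg_of_pos_of_neg (hbN j hj) (by linarith [(hv j hj).2])) hN

end DampedCoeff

theorem forall_mem_and_hasDerivWithinAt_iff {f g : ℝ → ℝ} {s : Set ℝ} (hfg : EqOn f g s)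
    (y : ℝ → ℝ) :
    (∀ t : ℝ, 0 ≤ t → y t ∈ s ∧ HasDerivWithinAt y (f (y t)) (Ici 0) t) ↔
      MapsTo y (Ici 0) s ∧ IsIntegralCurveOn y (fun _ => g) (Ici 0) :=
  ⟨fun h => ⟨fun t ht => (h t ht).1, fun t ht => by simpa [hfg (h t ht).1] using (h t ht).2⟩,
    fun h t ht => ⟨h.1 ht, by simpa [hfg (h.1 ht)] using h.2 t ht⟩⟩

theorem stmt_6_general
    (b : ℕ → ℝ)
    (hb_nonneg : ∀ j : ℕ, j ≠ 1 → 0 ≤ b j)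
    (hb_sum : HasSum (fun j : ℕ => if j = 1 then 0 else b j) (-(b 1)))
    (N : Finset ℕ) (hN : N.Nonempty)
    (hbN : ∀ k ∈ N, 0 < b k)
    (v : ℕ → ℝ) (hv : ∀ j ∈ N, v j ∈ Set.Ico (0 : ℝ) 1)
    (u : ℝ) (hu : u ∈ Set.Icc (0 : ℝ) 1) :
    (∃ y : ℝ → ℝ, y 0 = u ∧ ∀ t : ℝ, 0 ≤ t →
        y t ∈ Set.Icc (0 : ℝ) 1 ∧
        HasDerivWithinAt y
          ((∑ j ∈ N, b j * v j * (y t) ^ j)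
            + (∑' j : ℕ, if j ∈ N then 0 else b j * (y t) ^ j))
          (Set.Ici (0 : ℝ)) t) ∧
    (∀ y₁ y₂ : ℝ → ℝ,
      (y₁ 0 = u ∧ ∀ t : ℝ, 0 ≤ t →
        y₁ t ∈ Set.Icc (0 : ℝ) 1 ∧
        HasDerivWithinAt y₁
          ((∑ j ∈ N, b j * v j * (y₁ t) ^ j)
            + (∑' j : ℕ, if j ∈ N then 0 else b j * (y₁ t) ^ j))
          (Set.Ici (0 : ℝ)) t) →
      (y₂ 0 = u ∧ ∀ t : ℝ, 0 ≤ t →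
        y₂ t ∈ Set.Icc (0 : ℝ) 1 ∧
        HasDerivWithinAt y₂
          ((∑ j ∈ N, b j * v j * (y₂ t) ^ j)
            + (∑' j : ℕ, if j ∈ N then 0 else b j * (y₂ t) ^ j))
          (Set.Ici (0 : ℝ)) t) →
      ∀ t : ℝ, 0 ≤ t → y₁ t = y₂ t) := by
  have hb : HasSum b 0 := by
    convert hb_sum.add (hasSum_ite_eq 1 (b 1)) using 1
    · funext j; split_ifs <;> simp [*]
    · ring
  set F := FormalMultilinearSeries.ofScalarsSum (E := ℝ) (dampedCoeff N b v)
  have hc : Summable fun j => |dampedCoeff N b v j| :=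
    hb.summable.abs.of_nonneg_of_le (fun _ => abs_nonneg _) (abs_dampedCoeff_le hv)
  have hF : EqOn (fun x => ∑ j ∈ N, b j * v j * x ^ j + ∑' j, if j ∈ N then 0 else b j * x ^ j)
      F (Icc 0 1) := fun x hx =>
    (ofScalarsSum_dampedCoeff hb.summable (abs_le.2 ⟨by linarith [hx.1], hx.2⟩)).symm
  have hcont : ContinuousOn F (Icc 0 1) :=
    (FormalMultilinearSeries.continuousOn_ofScalarsSum_Icc hc).mono
      (Icc_subset_Icc_left (by norm_num))
  have hlip (r : ℝ) (hr : r < 1) : ∃ K, LipschitzOnWith K F (Icc 0 r) :=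
    (FormalMultilinearSeries.exists_lipschitzOnWith_ofScalarsSum hc hr).imp fun _ hK =>
      hK.mono fun x hx => ⟨by linarith [hx.1, hx.2], hx.2⟩
  have h1 := ofScalarsSum_dampedCoeff_one_neg hb hN hbN hv
  refine ⟨?_, fun y₁ y₂ h₁ h₂ => ?_⟩
  · obtain ⟨y, hy₀, hy⟩ := UnitIntervalODE.exists_isIntegralCurveOn hcont hlip
      (ofScalarsSum_dampedCoeff_zero_nonneg (hb_nonneg 0 zero_ne_one) hv) h1 hu
    exact ⟨y, hy₀, (forall_mem_and_hasDerivWithinAt_iff hF y).2 hy⟩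
  · obtain ⟨hm₁, hy₁⟩ := (forall_mem_and_hasDerivWithinAt_iff hF y₁).1 h₁.2
    obtain ⟨hm₂, hy₂⟩ := (forall_mem_and_hasDerivWithinAt_iff hF y₂).1 h₂.2
    exact UnitIntervalODE.eqOn_Ici_of_isIntegralCurveOn hcont hlip h1 hy₁ hy₂ hm₁ hm₂
      (h₁.1.trans h₂.1.symm)

/-- For every `v ∈ [0,1)^N` and every `u ∈ [0,1]`, there exists exactly one
differentiable function `y : [0,∞) → ℝ` with `0 ≤ y(t) ≤ 1` for all `t ≥ 0`, `y(0) = u`,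
and `y'(t) = B_N(y(t), v) + B̄_N(y(t))` for all `t ≥ 0`. -/
theorem stmt_6
    (b : ℕ → ℝ)
    (hb_nonneg : ∀ j : ℕ, j ≠ 1 → 0 ≤ b j)
    (hb1 : b 1 < 0)
    (hb_sum : HasSum (fun j : ℕ => if j = 1 then 0 else b j) (-(b 1)))
    (N : Finset ℕ) (hN : N.Nonempty) (h1N : (1 : ℕ) ∉ N)
    (hbN : ∀ k ∈ N, 0 < b k)
    (v : ℕ → ℝ) (hv : ∀ j ∈ N, v j ∈ Set.Ico (0 : ℝ) 1)
    (u : ℝ) (hu : u ∈ Set.Icc (0 : ℝ) 1) :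
    (∃ y : ℝ → ℝ, y 0 = u ∧ ∀ t : ℝ, 0 ≤ t →
        y t ∈ Set.Icc (0 : ℝ) 1 ∧
        HasDerivWithinAt y
          ((∑ j ∈ N, b j * v j * (y t) ^ j)
            + (∑' j : ℕ, if j ∈ N then 0 else b j * (y t) ^ j))
          (Set.Ici (0 : ℝ)) t) ∧
    (∀ y₁ y₂ : ℝ → ℝ,
      (y₁ 0 = u ∧ ∀ t : ℝ, 0 ≤ t →
        y₁ t ∈ Set.Icc (0 : ℝ) 1 ∧
        HasDerivWithinAt y₁
          ((∑ j ∈ N, b j * v j * (y₁ t) ^ j)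
            + (∑' j : ℕ, if j ∈ N then 0 else b j * (y₁ t) ^ j))
          (Set.Ici (0 : ℝ)) t) →
      (y₂ 0 = u ∧ ∀ t : ℝ, 0 ≤ t →
        y₂ t ∈ Set.Icc (0 : ℝ) 1 ∧
        HasDerivWithinAt y₂
          ((∑ j ∈ N, b j * v j * (y₂ t) ^ j)
            + (∑' j : ℕ, if j ∈ N then 0 else b j * (y₂ t) ^ j))
          (Set.Ici (0 : ℝ)) t) →
      ∀ t : ℝ, 0 ≤ t → y₁ t = y₂ t) :=
  stmt_6_general b hb_nonneg hb_sum N hN hbN v hv u hu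
end
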